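/- arXiv:1810.00483 — 7 statements merged into one kernel-verified Lean document; each statement's English description precedes it below -/
import Mathlib

section
/- Let M ∈ 𝔽_q[T] be a nonzero polynomial and n an integer with n ≥ deg(M). Then the number of monic polynomials of degree n in 𝔽_q[T] that are coprime to M equals q^{n − deg(M)} · φ(M), i.e., |M_{n;M}| = q^{n−deg(M)}·φ(M). -/
set_option linter.unusedSectionVars false


open Polynomial UniqueFactorizationMonoid

noncomputable section

/-- The finset of all polynomials of degree at most `n` over the finite field `F`. -/
def polysDegLE (F : Type) [Field F] [Fintype F] (n : ℕ) : Finset (Polynomial F) := by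
  classical exact
    (Finset.univ : Finset (Fin (n + 1) → F)).image fun c =>
      ∑ i : Fin (n + 1), Polynomial.C (c i) * Polynomial.X ^ (i : ℕ)

/-- `Mn F n` is the finset of monic polynomials of degree `n` over `F`. -/
def Mn (F : Type) [Field F] [Fintype F] (n : ℕ) : Finset (Polynomial F) := by
  classical exact (polysDegLE F n).filter fun f => f.Monic ∧ f.natDegree = n

/-- The short interval `I(f₀, h) = {f : deg (f - f₀) ≤ h}`. -/
def shortInterval {F : Type} [Field F] [Fintype F] (f₀ : Polynomial F) (h : ℕ) :
    Finset (Polynomial F) := by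
  classical exact (polysDegLE F h).image fun e => f₀ + e

/-- The extended factorization type of a polynomial: the multiset of pairs
`(deg P, e_P)` over the distinct monic irreducible factors `P` of `f`, where `e_P` is
the multiplicity of `P` in `f`. -/
def factType {F : Type} [Field F] (f : Polynomial F) : Multiset (ℕ × ℕ) := by
  classical exact
    (normalizedFactors f).toFinset.val.map fun P =>
      (P.natDegree, (normalizedFactors f).count P)

/-- A factorization function depends only on the extended factorization type. -/
def IsFactorizationFunction {F : Type} [Field F] (α : Polynomial F → ℂ) : Prop :=
  ∀ f g : Polynomial F, f.Monic → g.Monic → factType f = factType g → α f = α g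

/-- Mean value of `α` over the finite set `S`. -/
def avg {F : Type} [Field F] (S : Finset (Polynomial F)) (α : Polynomial F → ℂ) : ℂ :=
  (S.card : ℂ)⁻¹ * ∑ f ∈ S, α f

/-- `max_{f ∈ S} |α(f)|`. -/
def maxAbs {F : Type} [Field F] (S : Finset (Polynomial F)) (α : Polynomial F → ℂ) : ℝ :=
  ⨆ f ∈ S, ‖α f‖

/-- `MnM F n M` : monic polynomials of degree `n` coprime to `M`. -/
def MnM (F : Type) [Field F] [Fintype F] (n : ℕ) (M : Polynomial F) :
    Finset (Polynomial F) := by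
  classical exact (Mn F n).filter fun f => IsCoprime f M

/-- Euler's totient for polynomials: `φ(M) = |(𝔽_q[T]/(M))ˣ|`. -/
def polyPhi (F : Type) [Field F] (M : Polynomial F) : ℕ :=
  Nat.card (Polynomial F ⧸ Ideal.span {M})ˣ

variable {F : Type} [Field F] [Fintype F]

lemma coeff_sum_fin (k : ℕ) (a : Fin k → F) (j : ℕ) :
    (∑ i : Fin k, C (a i) * X ^ (i : ℕ)).coeff j = if h : j < k then a ⟨j, h⟩ else 0 := by
  rw [finset_sum_coeff]
  simp only [coeff_C_mul, coeff_X_pow, mul_ite, mul_one, mul_zero]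
  split
  · next h =>
    rw [Finset.sum_eq_single (⟨j, h⟩ : Fin k)]
    · simp
    · intro b _ hb
      rw [if_neg]
      intro hc
      exact hb (by apply Fin.ext; simp [← hc])
    · simp
  · next h =>
    apply Finset.sum_eq_zero
    intro b _
    rw [if_neg]
    intro hc
    exact h (hc ▸ b.2)

lemma degree_sum_fin_lt (k : ℕ) (a : Fin k → F) :
    (∑ i : Fin k, C (a i) * X ^ (i : ℕ)).degree < (k : WithBot ℕ) := by
  apply lt_of_le_of_lt (degree_sum_le _ _)
  rw [Finset.sup_lt_iff (by exact WithBot.bot_lt_coe k)]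
  intro b _
  exact lt_of_le_of_lt (degree_C_mul_X_pow_le _ _)
    (by exact_mod_cast WithBot.coe_lt_coe.mpr b.2)

lemma monic_expand {k : ℕ} {g : Polynomial F} (h1 : g.Monic) (h2 : g.natDegree = k) :
    g = X ^ k + ∑ i : Fin k, C (g.coeff (i : ℕ)) * X ^ (i : ℕ) := by
  ext j
  rw [coeff_add, coeff_X_pow, coeff_sum_fin]
  rcases lt_trichotomy j k with h | h | h
  · rw [if_neg h.ne, dif_pos h, zero_add]
  · subst h
    rw [if_pos rfl, dif_neg (lt_irrefl j), add_zero]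
    exact (h1.coeff_natDegree.symm.trans (by rw [h2])).symm
  · rw [if_neg h.ne', dif_neg (not_lt.2 h.le), add_zero,
      coeff_eq_zero_of_natDegree_lt (h2 ▸ h)]

lemma mem_polysDegLE {n : ℕ} {f : Polynomial F} :
    f ∈ polysDegLE F n ↔ f.natDegree ≤ n := by
  classical
  constructor
  · intro hf
    simp only [polysDegLE, Finset.mem_image] at hf
    obtain ⟨c, -, rfl⟩ := hf
    apply natDegree_sum_le_of_forall_le
    intro i _
    apply le_trans (natDegree_C_mul_le _ _)
    simpa using Nat.lt_succ_iff.mp i.2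
  · intro hf
    simp only [polysDegLE, Finset.mem_image]
    refine ⟨fun i => f.coeff (i : ℕ), Finset.mem_univ _, ?_⟩
    conv_rhs => rw [f.as_sum_range' (n + 1) (Nat.lt_succ_of_le hf)]
    rw [Fin.sum_univ_eq_sum_range (fun i => C (f.coeff i) * X ^ i)]
    simp [C_mul_X_pow_eq_monomial]

lemma mem_Mn {n : ℕ} {f : Polynomial F} :
    f ∈ Mn F n ↔ f.Monic ∧ f.natDegree = n := by
  classical
  simp only [Mn, Finset.mem_filter, mem_polysDegLE, and_iff_right_iff_imp]
  rintro ⟨-, h⟩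
  exact h.le

open scoped Classical in
lemma fiber_card (M : Polynomial F) (hM : M ≠ 0) (n : ℕ) (hn : M.natDegree ≤ n)
    (z : Polynomial F ⧸ Ideal.span {M}) :
    ((Mn F n).filter (fun f => Ideal.Quotient.mk (Ideal.span {M}) f = z)).card
      = Fintype.card F ^ (n - M.natDegree) := by
  classical
  set d := M.natDegree with hd
  set k := n - d with hk
  have hdk : d + k = n := Nat.add_sub_cancel' hn
  set Mm : Polynomial F := M * C M.leadingCoeff⁻¹ with hMmdef
  have hMm : Mm.Monic := monic_mul_leadingCoeff_inv hM
  have hMmdeg : Mm.natDegree = d := natDegree_mul_leadingCoeff_inv M hM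
  have hMmM : Mm * C M.leadingCoeff = M := by
    rw [hMmdef, mul_assoc, ← C_mul, inv_mul_cancel₀ (leadingCoeff_ne_zero.2 hM), C_1, mul_one]
  have hMdvdMm : M ∣ Mm := Dvd.intro _ rfl
  have hmkMm : Ideal.Quotient.mk (Ideal.span {M}) Mm = 0 :=
    (Ideal.Quotient.eq_zero_iff_dvd M Mm).2 hMdvdMm
  obtain ⟨f0, hf0⟩ := Ideal.Quotient.mk_surjective z
  set r0 : Polynomial F := f0 %ₘ Mm with hr0def
  have hr0deg : r0.degree < (d : WithBot ℕ) := by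
    have := degree_modByMonic_lt f0 hMm
    rwa [degree_eq_natDegree hMm.ne_zero, hMmdeg] at this
  have hmkr0 : Ideal.Quotient.mk (Ideal.span {M}) r0 = z := by
    have h := modByMonic_add_div f0 Mm
    have := congrArg (Ideal.Quotient.mk (Ideal.span {M})) h
    rw [map_add, map_mul, hmkMm, zero_mul, add_zero] at this
    rw [← hf0]; exact this
  -- the shape map
  set G : (Fin k → F) → Polynomial F :=
    fun a => X ^ k + ∑ i : Fin k, C (a i) * X ^ (i : ℕ) with hGdef
  have hGmonic : ∀ a, (G a).Monic := fun a =>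
    (monic_X_pow k).add_of_left (by rw [degree_X_pow]; exact degree_sum_fin_lt k a)
  have hGdeg : ∀ a, (G a).natDegree = k := by
    intro a
    have : (G a).degree = (k : WithBot ℕ) := by
      rw [hGdef]
      rw [degree_add_eq_left_of_degree_lt (by rw [degree_X_pow]; exact degree_sum_fin_lt k a),
        degree_X_pow]
    exact natDegree_eq_of_degree_eq_some this
  set Φ : (Fin k → F) → Polynomial F := fun a => Mm * G a + r0 with hΦdef
  have hΦmem : ∀ a, Φ a ∈ (Mn F n).filter
      (fun f => Ideal.Quotient.mk (Ideal.span {M}) f = z) := by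
    intro a
    have hmul : (Mm * G a).Monic := hMm.mul (hGmonic a)
    have hmuldeg : (Mm * G a).natDegree = n := by
      rw [natDegree_mul hMm.ne_zero (hGmonic a).ne_zero, hMmdeg, hGdeg, hdk]
    have hdeg : (Mm * G a).degree = (n : WithBot ℕ) := by
      rw [degree_eq_natDegree hmul.ne_zero, hmuldeg]
    have hr0lt : r0.degree < (Mm * G a).degree := by
      rw [hdeg]
      exact lt_of_lt_of_le hr0deg (by exact_mod_cast hn)
    have hmonic : (Φ a).Monic := hmul.add_of_left hr0lt
    have hΦdeg : (Φ a).natDegree = n := by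
      have : (Φ a).degree = (n : WithBot ℕ) := by
        rw [hΦdef]; simp only
        rw [degree_add_eq_left_of_degree_lt hr0lt, hdeg]
      exact natDegree_eq_of_degree_eq_some this
    rw [Finset.mem_filter, mem_Mn]
    refine ⟨⟨hmonic, hΦdeg⟩, ?_⟩
    rw [hΦdef]; simp only
    rw [map_add, map_mul, hmkMm, zero_mul, zero_add, hmkr0]
  refine Finset.card_bij' (fun f _ => fun j : Fin k => ((f - r0) /ₘ Mm).coeff (j : ℕ))
    (fun a _ => Φ a) (fun f _ => Finset.mem_univ _) (fun a _ => hΦmem a) ?_ ?_ |>.trans ?_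
  · -- left inverse : Φ (coeffs of (f - r0) /ₘ Mm) = f
    intro f hf
    rw [Finset.mem_filter, mem_Mn] at hf
    obtain ⟨⟨hfm, hfdeg⟩, hfz⟩ := hf
    have hdvd : Mm ∣ f - r0 := by
      have : Ideal.Quotient.mk (Ideal.span {M}) (f - r0) = 0 := by
        rw [map_sub, hfz, hmkr0, sub_self]
      have hMd : M ∣ f - r0 := (Ideal.Quotient.eq_zero_iff_dvd M _).1 this
      exact dvd_trans ⟨C M.leadingCoeff, hMmM.symm⟩ hMd
    set g : Polynomial F := (f - r0) /ₘ Mm with hgdef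
    have hfg : Mm * g = f - r0 := by
      have h := modByMonic_add_div (f - r0) Mm
      rwa [(modByMonic_eq_zero_iff_dvd hMm).2 hdvd, zero_add] at h
    have hfdegW : f.degree = (n : WithBot ℕ) := by
      rw [degree_eq_natDegree hfm.ne_zero, hfdeg]
    have hsubmonic : (f - r0).Monic := by
      have : (f + -r0).Monic := hfm.add_of_left
        (by rw [degree_neg, hfdegW]; exact lt_of_lt_of_le hr0deg (by exact_mod_cast hn))
      rwa [← sub_eq_add_neg] at this
    have hsubdeg : (f - r0).natDegree = n := by
      have : (f - r0).degree = f.degree := degree_sub_eq_left_of_degree_lt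
        (by rw [hfdegW]; exact lt_of_lt_of_le hr0deg (by exact_mod_cast hn))
      rw [hfdegW] at this
      exact natDegree_eq_of_degree_eq_some this
    have hgmonic : g.Monic := hMm.of_mul_monic_left (hfg ▸ hsubmonic)
    have hgdeg : g.natDegree = k := by
      have := natDegree_mul hMm.ne_zero hgmonic.ne_zero
      rw [hfg, hsubdeg, hMmdeg] at this
      omega
    have hgexp : G (fun j : Fin k => g.coeff (j : ℕ)) = g :=
      (monic_expand hgmonic hgdeg).symm
    show Mm * G _ + r0 = f
    rw [hgexp, hfg, sub_add_cancel]
  · -- right inverse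
    intro a _
    have : (Φ a - r0) /ₘ Mm = G a := by
      rw [hΦdef]; simp only
      rw [add_sub_cancel_right, mul_divByMonic_cancel_left _ hMm]
    funext j
    show ((Φ a - r0) /ₘ Mm).coeff (j : ℕ) = a j
    rw [this, hGdef]; simp only
    rw [coeff_add, coeff_X_pow, if_neg (by exact j.2.ne), zero_add, coeff_sum_fin,
      dif_pos j.2]
  · simp [hk]

lemma mem_MnM {n : ℕ} {M f : Polynomial F} :
    f ∈ MnM F n M ↔ f ∈ Mn F n ∧ IsCoprime f M := by
  classical
  simp [MnM]

lemma isCoprime_iff_isUnit_mk (M f : Polynomial F) :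
    IsCoprime f M ↔ IsUnit (Ideal.Quotient.mk (Ideal.span {M}) f) := by
  constructor
  · rintro ⟨u, v, h⟩
    apply IsUnit.of_mul_eq_one (Ideal.Quotient.mk (Ideal.span {M}) u)
    have := congrArg (Ideal.Quotient.mk (Ideal.span {M})) h
    rw [map_add, map_one, map_mul, map_mul,
      (Ideal.Quotient.eq_zero_iff_dvd M M).2 dvd_rfl, mul_zero, add_zero] at this
    rw [mul_comm] at this
    exact this
  · intro h
    obtain ⟨b, hb⟩ := isUnit_iff_exists_inv.1 h
    obtain ⟨g, rfl⟩ := Ideal.Quotient.mk_surjective b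
    have : Ideal.Quotient.mk (Ideal.span {M}) (f * g - 1) = 0 := by
      rw [map_sub, map_mul, map_one, hb, sub_self]
    obtain ⟨h', hh⟩ := (Ideal.Quotient.eq_zero_iff_dvd M _).1 this
    exact ⟨g, -h', by linear_combination hh⟩

lemma quotient_finite (M : Polynomial F) (hM : M ≠ 0) :
    Finite (Polynomial F ⧸ Ideal.span {M}) := by
  classical
  set Mm : Polynomial F := M * C M.leadingCoeff⁻¹ with hMmdef
  have hMm : Mm.Monic := monic_mul_leadingCoeff_inv hM
  have hMmdeg : Mm.natDegree = M.natDegree := natDegree_mul_leadingCoeff_inv M hM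
  apply Finite.of_surjective
    (fun p : (polysDegLE F M.natDegree : Finset (Polynomial F)) =>
      Ideal.Quotient.mk (Ideal.span {M}) p.1)
  intro z
  obtain ⟨f0, hf0⟩ := Ideal.Quotient.mk_surjective z
  have hmem : f0 %ₘ Mm ∈ polysDegLE F M.natDegree := by
    rw [mem_polysDegLE]
    rcases eq_or_ne (f0 %ₘ Mm) 0 with h | h
    · simp [h]
    · have hlt := degree_modByMonic_lt f0 hMm
      rw [degree_eq_natDegree hMm.ne_zero, hMmdeg] at hlt
      exact ((natDegree_lt_iff_degree_lt h).2 hlt).le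
  refine ⟨⟨f0 %ₘ Mm, hmem⟩, ?_⟩
  have h := modByMonic_add_div f0 Mm
  have h2 := congrArg (Ideal.Quotient.mk (Ideal.span {M})) h
  have hmkMm : Ideal.Quotient.mk (Ideal.span {M}) Mm = 0 :=
    (Ideal.Quotient.eq_zero_iff_dvd M Mm).2 (Dvd.intro _ rfl)
  rw [map_add, map_mul, hmkMm, zero_mul, add_zero] at h2
  rw [← hf0]
  exact h2

theorem card_monic_coprime_aux (F : Type) [Field F] [Fintype F]
    (M : Polynomial F) (hM : M ≠ 0) (n : ℕ) (hn : M.natDegree ≤ n) :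
    (MnM F n M).card = Fintype.card F ^ (n - M.natDegree) * polyPhi F M := by
  classical
  haveI : Finite (Polynomial F ⧸ Ideal.span {M}) := quotient_finite M hM
  haveI : Fintype (Polynomial F ⧸ Ideal.span {M}) := Fintype.ofFinite _
  set Q := Polynomial F ⧸ Ideal.span {M}
  set mk := Ideal.Quotient.mk (Ideal.span {M}) with hmk
  have hcard : (MnM F n M).card =
      ∑ z ∈ Finset.univ.filter (fun z : Q => IsUnit z),
        ((MnM F n M).filter (fun f => mk f = z)).card := by
    apply Finset.card_eq_sum_card_fiberwise
    intro f hf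
    rw [Finset.mem_coe, mem_MnM] at hf
    rw [Finset.mem_coe, Finset.mem_filter]
    exact ⟨Finset.mem_univ _, (isCoprime_iff_isUnit_mk M f).1 hf.2⟩
  rw [hcard]
  have hfib : ∀ z ∈ Finset.univ.filter (fun z : Q => IsUnit z),
      ((MnM F n M).filter (fun f => mk f = z)).card
        = Fintype.card F ^ (n - M.natDegree) := by
    intro z hz
    rw [Finset.mem_filter] at hz
    have : (MnM F n M).filter (fun f => mk f = z)
        = (Mn F n).filter (fun f => mk f = z) := by
      ext f
      rw [Finset.mem_filter, Finset.mem_filter, mem_MnM]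
      constructor
      · rintro ⟨⟨h1, -⟩, h3⟩; exact ⟨h1, h3⟩
      · rintro ⟨h1, h3⟩
        exact ⟨⟨h1, (isCoprime_iff_isUnit_mk M f).2 (h3 ▸ hz.2)⟩, h3⟩
    rw [this]
    convert fiber_card M hM n hn z using 2
  rw [Finset.sum_congr rfl hfib, Finset.sum_const, smul_eq_mul, mul_comm]
  congr 1
  have e : Qˣ ≃ {x : Q // IsUnit x} :=
    { toFun := fun u => ⟨u, u.isUnit⟩
      invFun := fun x => x.2.unit
      left_inv := fun u => Units.ext u.isUnit.unit_spec
      right_inv := fun x => Subtype.ext x.2.unit_spec }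
  simp only [polyPhi]
  rw [Nat.card_congr e, Nat.card_eq_fintype_card]
  rw [Fintype.card_subtype]

theorem card_monic_coprime (F : Type) [Field F] [Fintype F]
    (M : Polynomial F) (hM : M ≠ 0) (n : ℕ) (hn : M.natDegree ≤ n) :
    (MnM F n M).card = Fintype.card F ^ (n - M.natDegree) * polyPhi F M :=
  card_monic_coprime_aux F M hM n hn
end
end

section
/- Let n and k be positive integers, and let μ_1, …, μ_r be positive integers with μ_1 + … + μ_r = n. Then the sum, over all tuples (c_1, …, c_r) where each c_i is a composition of μ_i and the total number of parts of c_1, …, c_r is at most k, of the product ∏_{i=1}^{r} (last part of c_i), is at most Σ_{i=0}^{k} C(n,i), where C(n,i) denotes the binomial coefficient. -/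
open Finset

def BT.W (m b : ℕ) : ℕ :=
  ∑ c ∈ univ.filter (fun c : Composition m => c.length = b), c.blocks.getLast!

def BT.cons (m a : ℕ) (ha : a < m) (c : Composition (m - (a + 1))) : Composition m where
  blocks := (a + 1) :: c.blocks
  blocks_pos := by
    intro i hi
    rcases List.mem_cons.mp hi with h | h
    · omega
    · exact c.blocks_pos h
  blocks_sum := by
    have := c.blocks_sum
    simp [this]; omega

def BT.tail (m b : ℕ) (c : Composition m) (hc : c.length = b + 2) :
    Composition (m - (c.blocks.head! - 1 + 1)) where
  blocks := c.blocks.tail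
  blocks_pos := fun hi => c.blocks_pos (List.mem_of_mem_tail hi)
  blocks_sum := by
    have hs := c.blocks_sum
    have hne : c.blocks ≠ [] := by
      intro h; simp [Composition.length, h] at hc
    obtain ⟨x, t, hxt⟩ := List.exists_cons_of_ne_nil hne
    have hx : 0 < x := c.blocks_pos (by rw [hxt]; exact List.mem_cons_self)
    rw [hxt] at hs ⊢
    show t.sum = m - (x - 1 + 1)
    simp at hs
    omega

lemma BT.W_rec (m b : ℕ) :
    BT.W m (b + 2) = ∑ a ∈ range m, BT.W (m - (a + 1)) (b + 1) := by
  unfold BT.W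
  rw [Finset.sum_sigma']
  symm
  refine Finset.sum_bij'
    (i := fun c (hc : c ∈ (range m).sigma fun a =>
        univ.filter (fun c : Composition (m - (a + 1)) => c.length = b + 1)) =>
      BT.cons m c.1 (by exact mem_range.mp (mem_sigma.mp hc).1) c.2)
    (j := fun c (hc : c ∈ univ.filter (fun c : Composition m => c.length = b + 2)) =>
      ⟨c.blocks.head! - 1, BT.tail m b c (by simpa using (mem_filter.mp hc).2)⟩)
    ?_ ?_ ?_ ?_ ?_
  · rintro ⟨a, c⟩ hx
    have hc := (mem_filter.mp (mem_sigma.mp hx).2).2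
    simp only [mem_filter, mem_univ, true_and]
    simp only [Composition.length] at hc ⊢
    show ((a+1) :: c.blocks).length = b + 2
    simp [hc]
  · intro c hc
    have hlen : c.length = b + 2 := by simpa using (mem_filter.mp hc).2
    have hne : c.blocks ≠ [] := by
      intro h; simp [Composition.length, h] at hlen
    obtain ⟨x, t, hxt⟩ := List.exists_cons_of_ne_nil hne
    have hx : 0 < x := c.blocks_pos (by rw [hxt]; exact List.mem_cons_self)
    have hxm : x ≤ m := by
      have := c.blocks_sum
      rw [hxt] at this; simp at this; omega
    refine mem_sigma.mpr ⟨mem_range.mpr ?_, ?_⟩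
    · show c.blocks.head! - 1 < m
      rw [hxt]
      show x - 1 < m
      omega
    · simp only [mem_filter, mem_univ, true_and]
      show (BT.tail m b c hlen).blocks.length = b + 1
      show c.blocks.tail.length = b + 1
      simp only [Composition.length] at hlen
      rw [hxt] at hlen ⊢
      simp at hlen ⊢
      omega
  · rintro ⟨a, c⟩ hx
    refine Sigma.ext rfl (heq_of_eq ?_)
    exact Composition.ext rfl
  · intro c hc
    have hlen : c.length = b + 2 := by simpa using (mem_filter.mp hc).2
    have hne : c.blocks ≠ [] := by
      intro h; simp [Composition.length, h] at hlen
    obtain ⟨x, t, hxt⟩ := List.exists_cons_of_ne_nil hne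
    have hx : 0 < x := c.blocks_pos (by rw [hxt]; exact List.mem_cons_self)
    apply Composition.ext
    show (c.blocks.head! - 1 + 1) :: c.blocks.tail = c.blocks
    rw [hxt]
    show (x - 1 + 1) :: t = x :: t
    congr 1
    omega
  · rintro ⟨a, c⟩ hx
    have hc := (mem_filter.mp (mem_sigma.mp hx).2).2
    have hne : c.blocks ≠ [] := by
      intro h; simp [Composition.length, h] at hc
    show c.blocks.getLast! = ((a+1) :: c.blocks).getLast!
    cases hl : c.blocks with
    | nil => exact absurd hl hne
    | cons y t =>
      cases hgl : (y :: t).getLast? with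
      | none => simp at hgl
      | some z =>
        rw [List.getLast!_of_getLast? hgl,
          List.getLast!_of_getLast? ((List.getLast?_cons_cons).trans hgl)]

lemma BT.W_zero (m : ℕ) : BT.W m 0 = 0 := by
  apply Finset.sum_eq_zero
  intro c hc
  simp only [mem_filter, Composition.length] at hc
  rw [List.length_eq_zero_iff.mp hc.2]
  rfl

lemma BT.W_one (m : ℕ) : BT.W m 1 ≤ Nat.choose m 1 := by
  have hblocks : ∀ c : Composition m, c.length = 1 → c.blocks = [m] := by
    intro c hc
    obtain ⟨x, hx⟩ := List.length_eq_one_iff.mp hc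
    have := c.blocks_sum
    rw [hx] at this ⊢
    simp at this
    rw [this]
  calc BT.W m 1 ≤ (univ.filter (fun c : Composition m => c.length = 1)).card • m := by
        apply Finset.sum_le_card_nsmul
        intro c hc
        simp only [mem_filter] at hc
        rw [hblocks c hc.2]
        simp [List.getLast!]
    _ ≤ 1 * m := by
        rw [smul_eq_mul]
        apply Nat.mul_le_mul_right
        apply Finset.card_le_one.mpr
        intro c hc d hd
        simp only [mem_filter] at hc hd
        exact Composition.ext ((hblocks c hc.2).trans (hblocks d hd.2).symm)
    _ = Nat.choose m 1 := by simp

lemma BT.sum_range_choose_le (m t : ℕ) :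
    ∑ j ∈ Finset.range m, Nat.choose j t ≤ Nat.choose m (t + 1) := by
  induction m with
  | zero => simp
  | succ m ih =>
    rw [Finset.sum_range_succ, Nat.choose_succ_succ' (m) (t)]
    omega

lemma BT.W_le (b m : ℕ) : BT.W m b ≤ Nat.choose m b := by
  induction b generalizing m with
  | zero => rw [BT.W_zero]; simp
  | succ b ih =>
    cases b with
    | zero => exact BT.W_one m
    | succ b =>
      rw [BT.W_rec]
      calc ∑ a ∈ range m, BT.W (m - (a + 1)) (b + 1)
          ≤ ∑ a ∈ range m, Nat.choose (m - (a + 1)) (b + 1) := by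
            exact Finset.sum_le_sum fun a _ => ih _
        _ = ∑ a ∈ range m, Nat.choose (m - 1 - a) (b + 1) := by
            apply Finset.sum_congr rfl
            intro a ha
            congr 1
            omega
        _ = ∑ a ∈ range m, Nat.choose a (b + 1) :=
            Finset.sum_range_reflect (fun a => Nat.choose a (b + 1)) m
        _ ≤ Nat.choose m (b + 2) := BT.sum_range_choose_le m (b + 1)

open Classical in
lemma BT.keyB : ∀ (r : ℕ) (μ : Fin r → ℕ) (B : ℕ),
    ∑ c ∈ univ.filter (fun c : ∀ i : Fin r, Composition (μ i) => ∑ i, (c i).length = B),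
      ∏ i, (c i).blocks.getLast! ≤ Nat.choose (∑ i, μ i) B := by
  intro r
  induction r with
  | zero =>
    intro μ B
    cases B with
    | zero => simp
    | succ B => simp
  | succ r ih =>
    intro μ B
    have h1 : ∑ c ∈ univ.filter
          (fun c : ∀ i : Fin (r+1), Composition (μ i) => ∑ i, (c i).length = B),
          ∏ i, (c i).blocks.getLast!
        = ∑ p ∈ (univ ×ˢ univ).filter
            (fun p : Composition (μ 0) × (∀ i : Fin r, Composition (μ i.succ)) =>
              p.1.length + ∑ i, (p.2 i).length = B),
            p.1.blocks.getLast! * ∏ i, (p.2 i).blocks.getLast! := by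
      rw [Finset.sum_filter, Finset.sum_filter, Finset.univ_product_univ]
      apply Fintype.sum_equiv (Fin.consEquiv (fun i : Fin (r+1) => Composition (μ i))).symm
      intro c
      simp only [Fin.consEquiv_symm_apply, Fin.sum_univ_succ, Fin.prod_univ_succ]
      rfl
    have hmaps : ∀ p ∈ (univ ×ˢ univ).filter
        (fun p : Composition (μ 0) × (∀ i : Fin r, Composition (μ i.succ)) =>
          p.1.length + ∑ i, (p.2 i).length = B),
        p.1.length ∈ range (B + 1) := by
      intro p hp
      have hle := (mem_filter.mp hp).2
      clear h1
      simp only [mem_range]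
      omega
    have hstep : ∀ j ∈ range (B + 1),
        (∑ p ∈ ((univ ×ˢ univ).filter
            (fun p : Composition (μ 0) × (∀ i : Fin r, Composition (μ i.succ)) =>
              p.1.length + ∑ i, (p.2 i).length = B)).filter (fun p => p.1.length = j),
          p.1.blocks.getLast! * ∏ i, (p.2 i).blocks.getLast!)
          ≤ Nat.choose (μ 0) j * Nat.choose (∑ i : Fin r, μ (Fin.succ i)) (B - j) := by
      intro j hj
      clear h1
      rw [Finset.filter_filter]
      have hset : ((univ ×ˢ univ).filter
          (fun p : Composition (μ 0) × (∀ i : Fin r, Composition (μ i.succ)) =>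
            (p.1.length + ∑ i, (p.2 i).length = B) ∧ p.1.length = j))
          = (univ.filter (fun c : Composition (μ 0) => c.length = j)) ×ˢ
            (univ.filter (fun d : ∀ i : Fin r, Composition (μ i.succ) =>
              ∑ i, (d i).length = B - j)) := by
        rw [← Finset.filter_product]
        apply Finset.filter_congr
        intro p _
        have hjB : j ≤ B := by simpa using Nat.lt_succ_iff.mp (mem_range.mp hj)
        constructor
        · rintro ⟨h1, h2⟩; exact ⟨h2, by omega⟩
        · rintro ⟨h1, h2⟩; exact ⟨by omega, h1⟩
      rw [hset, Finset.sum_product]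
      dsimp only
      rw [← Finset.sum_mul_sum]
      exact Nat.mul_le_mul (BT.W_le j (μ 0)) (ih _ _)
    rw [h1]
    rw [← Finset.sum_fiberwise_of_maps_to hmaps]
    calc ∑ j ∈ range (B + 1), _ ≤ ∑ j ∈ range (B + 1),
          Nat.choose (μ 0) j * Nat.choose (∑ i : Fin r, μ (Fin.succ i)) (B - j) :=
        Finset.sum_le_sum hstep
      _ = Nat.choose (μ 0 + ∑ i : Fin r, μ (Fin.succ i)) B := by
        rw [Nat.add_choose_eq, Finset.Nat.sum_antidiagonal_eq_sum_range_succ_mk]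
      _ = Nat.choose (∑ i : Fin (r+1), μ i) B := by
        rw [Fin.sum_univ_succ]

open Classical in
theorem brick_tabloid_weight_sum_le (n k r : ℕ) (hn : 0 < n) (hk : 0 < k)
    (μ : Fin r → ℕ) (hμ : ∀ i, 0 < μ i) (hsum : ∑ i, μ i = n) :
    ∑ c ∈ Finset.univ.filter
        (fun c : ∀ i : Fin r, Composition (μ i) => ∑ i, (c i).length ≤ k),
      ∏ i, (c i).blocks.getLast! ≤ ∑ i ∈ Finset.range (k + 1), Nat.choose n i := by
  have hmaps : ∀ c ∈ Finset.univ.filter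
      (fun c : ∀ i : Fin r, Composition (μ i) => ∑ i, (c i).length ≤ k),
      (∑ i, (c i).length) ∈ range (k + 1) := by
    intro c hc
    have := (mem_filter.mp hc).2
    simp only [mem_range]
    omega
  rw [← Finset.sum_fiberwise_of_maps_to hmaps]
  apply Finset.sum_le_sum
  intro B _
  calc ∑ c ∈ (Finset.univ.filter
        (fun c : ∀ i : Fin r, Composition (μ i) => ∑ i, (c i).length ≤ k)).filter
          (fun c => ∑ i, (c i).length = B),
        ∏ i, (c i).blocks.getLast!
      ≤ ∑ c ∈ Finset.univ.filter
          (fun c : ∀ i : Fin r, Composition (μ i) => ∑ i, (c i).length = B),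
        ∏ i, (c i).blocks.getLast! := by
        apply Finset.sum_le_sum_of_subset
        intro c hc
        simp only [mem_filter] at hc ⊢
        exact ⟨hc.1.1, hc.2⟩
    _ ≤ Nat.choose (∑ i, μ i) B := BT.keyB r μ B
    _ = Nat.choose n B := by rw [hsum]
end

section
/- Let n ≥ 1 and m ≥ 2 be integers and let z_1, z_2 ∈ ℂ. For a permutation π of {1, …, n}, let a(π) be the number of orbits of π on {1,…,n} whose size is not divisible by m and b(π) the number of orbits whose size is divisible by m (fixed points count as orbits of size 1), and set f(π) := z_1^{a(π)} · z_2^{b(π)}. Then (1/n!) Σ_{π ∈ S_n} f(π) equals the coefficient of u^n in the formal power series exp( z_1 Σ_{j ≥ 1, m ∤ j} u^j/j + z_2 Σ_{j ≥ 1, m ∣ j} u^j/j ) ∈ ℂ[[u]]. -/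
open Equiv Equiv.Perm Finset List PowerSeries

open Equiv Equiv.Perm Finset List

namespace MCS

variable (c : ℕ → ℂ)

noncomputable def wt {α : Type*} [Fintype α] [DecidableEq α] (π : Perm α) : ℂ :=
  ((π.partition.parts).map c).prod

noncomputable def wsum (α : Type*) [Fintype α] [DecidableEq α] : ℂ :=
  ∑ π : Perm α, wt c π

variable {c}

lemma permCongr_eq_extendDomain {α β : Type*} [DecidableEq β] (e : α ≃ β) (g : Perm α) :
    e.permCongr g = g.extendDomain (e.trans (Equiv.subtypeUnivEquiv
      (fun _ : β => trivial : ∀ x : β, (fun _ => True) x)).symm) := by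
  ext b
  rw [Equiv.Perm.extendDomain_apply_subtype _ _ trivial]
  simp [Equiv.subtypeUnivEquiv]

lemma parts_permCongr {α β : Type*} [Fintype α] [DecidableEq α] [Fintype β] [DecidableEq β]
    (e : α ≃ β) (g : Perm α) :
    ((e.permCongr g).partition).parts = g.partition.parts := by
  rw [parts_partition, parts_partition, permCongr_eq_extendDomain e g,
    Equiv.Perm.cycleType_extendDomain, Equiv.Perm.card_support_extend_domain,
    Fintype.card_congr e]

lemma wsum_congr {α β : Type*} [Fintype α] [DecidableEq α] [Fintype β] [DecidableEq β]
    (e : α ≃ β) : wsum c α = wsum c β :=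
  Fintype.sum_equiv e.permCongr _ _ (fun g => by rw [wt, wt, parts_permCongr])

noncomputable def p (c : ℕ → ℂ) (k : ℕ) : ℂ := wsum c (Fin k)

lemma wsum_eq_p {α : Type*} [Fintype α] [DecidableEq α] : wsum c α = p c (Fintype.card α) :=
  wsum_congr (Fintype.equivFin α)

lemma p_zero : p c 0 = 1 := by
  rw [p, wsum]
  rw [Fintype.sum_subsingleton _ (1 : Perm (Fin 0))]
  simp [wt, parts_partition]



noncomputable def W (c : ℕ → ℂ) : PowerSeries ℂ :=
  PowerSeries.mk fun j : ℕ => if j = 0 then 0 else c j / (j : ℂ)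

variable {c : ℕ → ℂ}

lemma coeff_W_pow_eq_zero : ∀ i k : ℕ, k < i → PowerSeries.coeff (R := ℂ) k ((W c) ^ i) = 0 := by
  intro i
  induction i with
  | zero => intro k hk; omega
  | succ i ih =>
    intro k hk
    rw [pow_succ', PowerSeries.coeff_mul]
    refine Finset.sum_eq_zero fun x hx => ?_
    rw [Finset.HasAntidiagonal.mem_antidiagonal] at hx
    rcases Nat.eq_zero_or_pos x.1 with h0 | h0
    · simp [W, h0]
    · rw [ih x.2 (by omega), mul_zero]

noncomputable def A (c : ℕ → ℂ) (k : ℕ) : ℂ :=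
  ∑ i ∈ Finset.range (k + 1), (PowerSeries.coeff (R := ℂ) k ((W c) ^ i)) / (i.factorial : ℂ)

lemma tsum_eq_A (n : ℕ) :
    (∑' i : ℕ, (PowerSeries.coeff (R := ℂ) n ((W c) ^ i)) / (i.factorial : ℂ)) = A c n := by
  rw [A, tsum_eq_sum]
  intro i hi
  rw [Finset.mem_range, not_lt] at hi
  rw [coeff_W_pow_eq_zero i n (by omega), zero_div]

lemma A_zero : A c 0 = 1 := by simp [A]

lemma partial_A (k a : ℕ) (ha : a ≤ k) :
    ∑ i ∈ Finset.range (k + 1), (PowerSeries.coeff (R := ℂ) a ((W c) ^ i)) / (i.factorial : ℂ) = A c a := by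
  rw [A]
  refine (Finset.sum_subset (by intro x; simp; omega) ?_).symm
  intro i _ hi
  rw [Finset.mem_range, not_lt] at hi
  rw [coeff_W_pow_eq_zero i a (by omega), zero_div]

lemma A_rec (k : ℕ) (hk : 1 ≤ k) :
    (k : ℂ) * A c k = ∑ j ∈ Finset.Icc 1 k, c j * A c (k - j) := by
  have hk1 : k - 1 + 1 = k := by omega
  have hdW : ∀ b : ℕ, PowerSeries.coeff (R := ℂ) b (d⁄dX ℂ (W c)) = c (b + 1) := by
    intro b
    rw [PowerSeries.coeff_derivative]
    simp only [W, PowerSeries.coeff_mk, Nat.succ_ne_zero, if_false]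
    push_cast
    rw [div_mul_cancel₀]
    exact Nat.cast_add_one_ne_zero b
  have key : ∀ i : ℕ, (k : ℂ) * PowerSeries.coeff (R := ℂ) k ((W c) ^ (i + 1)) =
      (i + 1 : ℂ) * ∑ x ∈ antidiagonal (k - 1),
        PowerSeries.coeff (R := ℂ) x.1 ((W c) ^ i) * c (x.2 + 1) := by
    intro i
    have h1 : PowerSeries.coeff (R := ℂ) (k - 1) (d⁄dX ℂ ((W c) ^ (i + 1))) =
        PowerSeries.coeff (R := ℂ) k ((W c) ^ (i + 1)) * (k : ℂ) := by
      rw [PowerSeries.coeff_derivative, hk1]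
      congr 1
      exact_mod_cast congrArg (Nat.cast (R := ℂ)) hk1
    have h2 : d⁄dX ℂ ((W c) ^ (i + 1)) = (i + 1 : ℕ) • ((W c) ^ i • d⁄dX ℂ (W c)) := by
      simpa using Derivation.leibniz_pow (d⁄dX ℂ) (W c) (i + 1)
    rw [h2] at h1
    have h3 : PowerSeries.coeff (R := ℂ) (k - 1) ((i + 1) • (W c) ^ i • d⁄dX ℂ (W c)) =
        (i + 1 : ℂ) * ∑ x ∈ antidiagonal (k - 1),
          PowerSeries.coeff (R := ℂ) x.1 ((W c) ^ i) * c (x.2 + 1) := by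
      rw [map_nsmul, nsmul_eq_mul]
      push_cast
      congr 1
      rw [smul_eq_mul, PowerSeries.coeff_mul]
      exact Finset.sum_congr rfl fun x _ => by rw [hdW]
    rw [mul_comm, ← h1, h3]
  rw [A, Finset.mul_sum, Finset.sum_range_succ']
  have h0 : (k : ℂ) * ((PowerSeries.coeff (R := ℂ) k) ((W c) ^ 0) / (Nat.factorial 0 : ℂ)) = 0 := by
    rw [pow_zero, PowerSeries.coeff_one, if_neg (by omega)]
    simp
  rw [h0, add_zero]
  have hstep : ∀ i ∈ Finset.range k, (k : ℂ) * ((PowerSeries.coeff (R := ℂ) k) ((W c) ^ (i + 1)) /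
      ((i+1).factorial : ℂ)) = (1 / (i.factorial : ℂ)) *
      ∑ x ∈ antidiagonal (k - 1), PowerSeries.coeff (R := ℂ) x.1 ((W c) ^ i) * c (x.2 + 1) := by
    intro i _
    rw [mul_div_assoc']
    rw [key i]
    rw [Nat.factorial_succ]
    push_cast
    have hfac : (i.factorial : ℂ) ≠ 0 := Nat.cast_ne_zero.mpr (Nat.factorial_ne_zero i)
    have h1i : ((i : ℂ) + 1) ≠ 0 := Nat.cast_add_one_ne_zero i
    field_simp
  rw [Finset.sum_congr rfl hstep]
  have step2 : ∑ i ∈ Finset.range k, (1 / (i.factorial : ℂ)) *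
      ∑ x ∈ antidiagonal (k - 1), PowerSeries.coeff (R := ℂ) x.1 ((W c) ^ i) * c (x.2 + 1) =
      ∑ i ∈ Finset.range k, c (k - i) * A c i := by
    have e1 : ∀ i ∈ Finset.range k, (1 / (i.factorial : ℂ)) *
        ∑ x ∈ antidiagonal (k - 1), PowerSeries.coeff (R := ℂ) x.1 ((W c) ^ i) * c (x.2 + 1) =
        ∑ x ∈ antidiagonal (k - 1),
          c (x.2 + 1) * (PowerSeries.coeff (R := ℂ) x.1 ((W c) ^ i) / (i.factorial : ℂ)) := by
      intro i _
      rw [Finset.mul_sum]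
      exact Finset.sum_congr rfl fun x _ => by ring
    rw [Finset.sum_congr rfl e1, Finset.sum_comm]
    have e2 : ∀ x ∈ antidiagonal (k - 1), ∑ i ∈ Finset.range k,
        c (x.2 + 1) * (PowerSeries.coeff (R := ℂ) x.1 ((W c) ^ i) / (i.factorial : ℂ)) =
        c (x.2 + 1) * A c x.1 := by
      intro x hx
      rw [Finset.HasAntidiagonal.mem_antidiagonal] at hx
      rw [← Finset.mul_sum]
      congr 1
      have : k = (k - 1) + 1 := by omega
      rw [this]
      exact partial_A (k - 1) x.1 (by omega)
    rw [Finset.sum_congr rfl e2, Finset.Nat.sum_antidiagonal_eq_sum_range_succ_mk,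
      Nat.succ_eq_add_one, hk1]
    refine Finset.sum_congr rfl fun i hi => ?_
    rw [Finset.mem_range] at hi
    congr 2
    omega
  rw [step2]
  have step3 : ∑ j ∈ Finset.Icc 1 k, c j * A c (k - j) =
      ∑ i ∈ Finset.range k, c (k - i) * A c i := by
    refine Finset.sum_nbij' (fun j => k - j) (fun i => k - i) ?_ ?_ ?_ ?_ ?_
    · intro a ha; rw [Finset.mem_Icc] at ha; rw [Finset.mem_range]; omega
    · intro a ha; rw [Finset.mem_range] at ha; rw [Finset.mem_Icc]; omega
    · intro a ha; rw [Finset.mem_Icc] at ha; omega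
    · intro a ha; rw [Finset.mem_range] at ha; omega
    · intro a ha; rw [Finset.mem_Icc] at ha
      congr 2
      omega
  exact step3.symm

variable {α : Type*} [Fintype α] [DecidableEq α]

/-- the cycle of `x0` under `π` as a list, with `[x0]` for a fixed point -/
def cl (x0 : α) (π : Perm α) : List α := if π x0 = x0 then [x0] else π.toList x0

variable {x0 : α} {π : Perm α}

lemma mem_cl {y : α} : y ∈ cl x0 π ↔ π.SameCycle x0 y := by
  by_cases h : π x0 = x0
  · simp only [cl, if_pos h, List.mem_singleton]
    constructor
    · rintro rfl; exact ⟨0, rfl⟩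
    · rintro ⟨i, rfl⟩
      exact Equiv.Perm.zpow_apply_eq_self_of_apply_eq_self h i
  · rw [cl, if_neg h, Equiv.Perm.mem_toList_iff]
    exact ⟨fun h' => h'.1, fun h' => ⟨h', Equiv.Perm.mem_support.mpr h⟩⟩

lemma nodup_cl : (cl x0 π).Nodup := by
  by_cases h : π x0 = x0
  · simp [cl, h]
  · rw [cl, if_neg h]; exact Equiv.Perm.nodup_toList π x0

lemma head?_toList (h : x0 ∈ π.support) : (π.toList x0).head? = some x0 := by
  have hpos : 0 < (π.cycleOf x0).support.card := by
    rw [← Equiv.Perm.length_toList]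
    exact Equiv.Perm.length_toList_pos_of_mem_support _ _ h
  obtain ⟨m, hm⟩ : ∃ m, (π.cycleOf x0).support.card = m + 1 :=
    ⟨(π.cycleOf x0).support.card - 1, by omega⟩
  rw [Equiv.Perm.toList, hm, List.iterate]
  simp

lemma head?_cl : (cl x0 π).head? = some x0 := by
  by_cases h : π x0 = x0
  · simp [cl, h]
  · rw [cl, if_neg h]; exact head?_toList (Equiv.Perm.mem_support.mpr h)

lemma x0_mem_cl : x0 ∈ cl x0 π := mem_cl.mpr (Equiv.Perm.SameCycle.refl _ _)

lemma cl_stab {y : α} : y ∉ cl x0 π ↔ π y ∉ cl x0 π := by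
  rw [not_iff_not, mem_cl, mem_cl, Equiv.Perm.sameCycle_apply_right]

/-- the rest of the permutation, off the cycle of `x0` -/
def σp (x0 : α) (π : Perm α) : Perm {y : α // y ∉ cl x0 π} :=
  π.subtypePerm fun _ => cl_stab.symm

lemma disj (l : List α) (τ : Perm {y : α // y ∉ l}) :
    Equiv.Perm.Disjoint l.formPerm (Equiv.Perm.ofSubtype τ) := by
  intro y
  by_cases hy : y ∈ l
  · right
    exact Equiv.Perm.ofSubtype_apply_of_not_mem τ (by simpa using hy)
  · left
    exact List.formPerm_apply_of_notMem hy

lemma formPerm_cl : (cl x0 π).formPerm = π.cycleOf x0 := by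
  by_cases h : π x0 = x0
  · rw [cl, if_pos h, List.formPerm_singleton, eq_comm, Equiv.Perm.cycleOf_eq_one_iff]
    exact h
  · rw [cl, if_neg h, Equiv.Perm.formPerm_toList]

lemma sigma_apply {y : α} (hy : y ∉ cl x0 π) : ((σp x0 π) ⟨y, hy⟩ : α) = π y := rfl

lemma decomp : (cl x0 π).formPerm * Equiv.Perm.ofSubtype (σp x0 π) = π := by
  ext y
  rw [Equiv.Perm.mul_apply]
  by_cases hy : y ∈ cl x0 π
  · rw [Equiv.Perm.ofSubtype_apply_of_not_mem _ (by simpa using hy), formPerm_cl]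
    exact (mem_cl.mp hy).cycleOf_apply
  · rw [Equiv.Perm.ofSubtype_apply_of_mem _ (by simpa using hy)]
    rw [sigma_apply hy]
    exact List.formPerm_apply_of_notMem (cl_stab.mp hy)

lemma cl_formPerm_valid (l : List α) (hn : l.Nodup) (hh : l.head? = some x0) :
    cl x0 l.formPerm = l := by
  obtain ⟨t, rfl⟩ : ∃ t, l = x0 :: t := by
    cases l with
    | nil => simp at hh
    | cons a t => exact ⟨t, by simpa using congrArg (Option.getD · x0) hh⟩
  match t with
  | [] => simp [cl]
  | b :: t' =>
    have hlen : 2 ≤ (x0 :: b :: t').length := by simp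
    have hne : (x0 :: b :: t').formPerm x0 ≠ x0 :=
      (List.formPerm_apply_mem_ne_self_iff _ hn _ (by simp)).mpr hlen
    rw [cl, if_neg hne]
    exact Equiv.Perm.toList_formPerm_nontrivial _ hlen hn

lemma pi_pow_x0 (l : List α) (hx0 : x0 ∈ l) (τ : Perm {y : α // y ∉ l}) (k : ℕ) :
    ((l.formPerm * Equiv.Perm.ofSubtype τ) ^ k) x0 = (l.formPerm ^ k) x0 := by
  rw [((disj l τ).commute).mul_pow]
  rw [Equiv.Perm.mul_apply]
  rw [Equiv.Perm.pow_apply_eq_self_of_apply_eq_self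
    (Equiv.Perm.ofSubtype_apply_of_not_mem τ (by simpa using hx0)) k]

lemma cl_decomp (l : List α) (hn : l.Nodup) (hh : l.head? = some x0)
    (τ : Perm {y : α // y ∉ l}) :
    cl x0 (l.formPerm * Equiv.Perm.ofSubtype τ) = l := by
  have hx0 : x0 ∈ l := List.mem_of_mem_head? (by rw [hh]; exact rfl)
  have hπx0 : (l.formPerm * Equiv.Perm.ofSubtype τ) x0 = l.formPerm x0 := by
    rw [Equiv.Perm.mul_apply, Equiv.Perm.ofSubtype_apply_of_not_mem τ (by simpa using hx0)]
  obtain ⟨t, rfl⟩ : ∃ t, l = x0 :: t := by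
    cases l with
    | nil => simp at hh
    | cons a t => exact ⟨t, by simpa using congrArg (Option.getD · x0) hh⟩
  match t with
  | [] =>
    have h1 : ((x0 :: ([] : List α)).formPerm * Equiv.Perm.ofSubtype τ) x0 = x0 := by
      rw [hπx0, List.formPerm_singleton]; rfl
    rw [cl, if_pos h1]
  | b :: t' =>
    have hlen : 2 ≤ (x0 :: b :: t').length := by simp
    have hne : (x0 :: b :: t').formPerm x0 ≠ x0 :=
      (List.formPerm_apply_mem_ne_self_iff _ hn _ (by simp)).mpr hlen
    have hπne : ((x0 :: b :: t').formPerm * Equiv.Perm.ofSubtype τ) x0 ≠ x0 := by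
      rw [hπx0]; exact hne
    rw [cl, if_neg hπne]
    have hcyc : ((x0 :: b :: t').formPerm * Equiv.Perm.ofSubtype τ).cycleOf x0 =
        (x0 :: b :: t').formPerm.cycleOf x0 :=
      Equiv.Perm.cycleOf_mul_of_apply_right_eq_self (disj _ τ).commute x0
        (Equiv.Perm.ofSubtype_apply_of_not_mem τ (by simpa using hx0))
    have htl : ((x0 :: b :: t').formPerm * Equiv.Perm.ofSubtype τ).toList x0 =
        (x0 :: b :: t').formPerm.toList x0 := by
      rw [Equiv.Perm.toList, Equiv.Perm.toList, hcyc]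
      apply List.ext_getElem (by simp)
      intro k _ _
      simp only [List.getElem_iterate, ← Equiv.Perm.coe_pow]
      exact pi_pow_x0 _ hx0 τ k
    rw [htl]
    exact Equiv.Perm.toList_formPerm_nontrivial _ hlen hn

lemma sigma_decomp (l : List α) (hn : l.Nodup) (hh : l.head? = some x0)
    (τ : Perm {y : α // y ∉ l}) (y : α) (hy : y ∉ l) :
    (l.formPerm * Equiv.Perm.ofSubtype τ) y = ((τ ⟨y, hy⟩ : {y : α // y ∉ l}) : α) := by
  rw [Equiv.Perm.mul_apply, Equiv.Perm.ofSubtype_apply_of_mem τ (by simpa using hy)]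
  exact List.formPerm_apply_of_notMem (τ ⟨y, hy⟩).2

variable {c : ℕ → ℂ}

omit [Fintype α] in
lemma card_compl_list (l : List α) (hn : l.Nodup) [Fintype α] :
    Fintype.card {y : α // y ∉ l} = Fintype.card α - l.length := by
  have h1 : Fintype.card {y : α // y ∈ l} = l.length := by
    rw [Fintype.card_congr (Equiv.subtypeEquivRight (fun y => (List.mem_toFinset).symm))]
    rw [Fintype.card_coe]
    exact List.toFinset_card_of_nodup hn
  rw [Fintype.card_subtype_compl, h1]

lemma parts_decomp (l : List α) (hn : l.Nodup) (hh : l.head? = some x0)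
    (τ : Perm {y : α // y ∉ l}) :
    ((l.formPerm * Equiv.Perm.ofSubtype τ).partition).parts =
      l.length ::ₘ (τ.partition).parts := by
  have hd := disj l τ
  have hct : (Equiv.Perm.ofSubtype τ).cycleType = τ.cycleType := Equiv.Perm.cycleType_ofSubtype
  have hst : (Equiv.Perm.ofSubtype τ).support.card = τ.support.card := by
    rw [Equiv.Perm.support_ofSubtype, Finset.card_map]
  have hτle : τ.support.card ≤ Fintype.card α - l.length := by
    rw [← card_compl_list l hn]
    rw [← Finset.card_univ]
    exact Finset.card_le_univ τ.support
  have hcard : 1 ≤ Fintype.card α := Fintype.card_pos_iff.mpr ⟨x0⟩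
  rw [Equiv.Perm.parts_partition, Equiv.Perm.parts_partition, Equiv.Perm.Disjoint.cycleType_mul hd,
    Equiv.Perm.Disjoint.card_support_mul hd, hct, hst, card_compl_list l hn]
  obtain ⟨t, rfl⟩ : ∃ t, l = x0 :: t := by
    cases l with
    | nil => simp at hh
    | cons a t => exact ⟨t, by simpa using congrArg (Option.getD · x0) hh⟩
  match t with
  | [] =>
    rw [List.formPerm_singleton, Equiv.Perm.cycleType_one, Equiv.Perm.support_one]
    simp only [Finset.card_empty, zero_add, List.length_singleton]
    have harith : Fintype.card α - τ.support.card =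
        (Fintype.card α - 1 - τ.support.card) + 1 := by
      simp only [List.length_singleton] at hτle
      omega
    rw [harith, Multiset.replicate_succ, Multiset.add_cons]
  | b :: t' =>
    have hlen : 2 ≤ (x0 :: b :: t').length := by simp
    have hcyc : (x0 :: b :: t').formPerm.IsCycle := List.isCycle_formPerm hn hlen
    have hsupp : (x0 :: b :: t').formPerm.support.card = (x0 :: b :: t').length := by
      rw [List.support_formPerm_of_nodup _ hn (fun x hx => by simp at hx),
        List.toFinset_card_of_nodup hn]
    rw [hcyc.cycleType, hsupp]
    have harith : Fintype.card α - ((x0 :: b :: t').length + τ.support.card) =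
        Fintype.card α - (x0 :: b :: t').length - τ.support.card := by omega
    rw [harith]
    have : ↑[(x0 :: b :: t').length] = ({(x0 :: b :: t').length} : Multiset ℕ) := rfl
    rw [Multiset.singleton_add, Multiset.cons_add]

lemma wt_decomp (l : List α) (hn : l.Nodup) (hh : l.head? = some x0)
    (τ : Perm {y : α // y ∉ l}) :
    wt c (l.formPerm * Equiv.Perm.ofSubtype τ) = c l.length * wt c τ := by
  rw [wt, parts_decomp l hn hh τ, Multiset.map_cons, Multiset.prod_cons, wt]

lemma mem_V {l : List α} :
    l ∈ (univ : Finset (Perm α)).image (cl x0) ↔ l.Nodup ∧ l.head? = some x0 := by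
  constructor
  · intro hl
    obtain ⟨π, -, rfl⟩ := Finset.mem_image.mp hl
    exact ⟨nodup_cl, head?_cl⟩
  · rintro ⟨hn, hh⟩
    exact Finset.mem_image.mpr ⟨l.formPerm, Finset.mem_univ _, cl_formPerm_valid l hn hh⟩

omit [Fintype α] in
lemma get_zero_of_head? {l : List α} (hh : l.head? = some x0) (h0 : 0 < l.length) :
    l.get ⟨0, h0⟩ = x0 := by
  cases l with
  | nil => simp at hh
  | cons a t => simpa using hh

omit [Fintype α] in
def embOf (x0 : α) (j : ℕ) (hj1 : 1 ≤ j) (l : List α) (hn : l.Nodup) (hh : l.head? = some x0)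
    (hlen : l.length = j) : Fin (j - 1) ↪ {y : α // y ≠ x0} where
  toFun i := ⟨l.get ⟨(i : ℕ) + 1, by have := i.isLt; omega⟩, by
    intro hx
    have h0 : l.get ⟨0, by omega⟩ = x0 := get_zero_of_head? hh (by omega)
    have := List.nodup_iff_injective_get.mp hn
      (show l.get ⟨(i : ℕ) + 1, by have := i.isLt; omega⟩ =
        l.get ⟨0, by omega⟩ from hx.trans h0.symm)
    simpa using congrArg Fin.val this⟩
  inj' a b hab := by
    apply Fin.ext
    have h1 : l.get ⟨(a : ℕ) + 1, by have := a.isLt; omega⟩ =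
        l.get ⟨(b : ℕ) + 1, by have := b.isLt; omega⟩ := by
      simpa using congrArg Subtype.val hab
    have h2 := congrArg Fin.val (List.nodup_iff_injective_get.mp hn h1)
    simpa using h2

omit [Fintype α] in
def listOf (x0 : α) (j : ℕ) (e : Fin (j - 1) ↪ {y : α // y ≠ x0}) : List α :=
  x0 :: List.ofFn (fun i => ((e i) : α))

lemma count_V (x0 : α) (j : ℕ) (hj1 : 1 ≤ j) :
    ((((univ : Finset (Perm α)).image (cl x0)).filter fun l => l.length = j).card : ℕ) =
      (Fintype.card α - 1).descFactorial (j - 1) := by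
  have hcard : (((univ : Finset (Perm α)).image (cl x0)).filter fun l => l.length = j).card =
      (univ : Finset (Fin (j - 1) ↪ {y : α // y ≠ x0})).card := by
    refine Finset.card_bij'
      (fun l hl => embOf x0 j hj1 l (mem_V.mp (Finset.mem_filter.mp hl).1).1
        (mem_V.mp (Finset.mem_filter.mp hl).1).2 (Finset.mem_filter.mp hl).2)
      (fun e _ => listOf x0 j e) (fun _ _ => Finset.mem_univ _) ?_ ?_ ?_
    · -- listOf in filter
      intro e _
      rw [Finset.mem_filter]
      have hnodup : (listOf x0 j e).Nodup := by
        rw [listOf, List.nodup_cons]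
        constructor
        · intro hmem
          obtain ⟨i, hi⟩ := List.mem_ofFn.mp hmem
          exact (e i).2 hi
        · rw [List.nodup_ofFn]
          intro a b hab
          exact e.injective (Subtype.ext hab)
      refine ⟨mem_V.mpr ⟨hnodup, rfl⟩, ?_⟩
      simp only [listOf, List.length_cons, List.length_ofFn]
      omega
    · -- left inverse
      intro l hl
      obtain ⟨hlV, hlen⟩ := Finset.mem_filter.mp hl
      obtain ⟨hn, hh⟩ := mem_V.mp hlV
      refine List.ext_get ?_ ?_
      · simp only [listOf, List.length_cons, List.length_ofFn]; omega
      · intro k h1 h2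
        match k with
        | 0 =>
          exact (get_zero_of_head? hh (by omega)).symm
        | Nat.succ k' =>
          have h1' : k' < j - 1 := by
            simpa [listOf] using h1
          simp only [listOf, List.get_eq_getElem, List.getElem_cons_succ, List.getElem_ofFn]
          rfl
    · -- right inverse
      intro e _
      ext i
      simp only [embOf, listOf, Function.Embedding.coeFn_mk, List.get_eq_getElem,
        List.getElem_cons_succ, List.getElem_ofFn, Fin.eta]
  rw [hcard, Finset.card_univ, Fintype.card_embedding_eq, Fintype.card_fin]
  congr 1
  rw [Fintype.card_subtype_compl, Fintype.card_subtype_eq]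

omit [Fintype α] in
lemma perm_heq {l l' : List α} (h : l = l') (τ : Perm {y : α // y ∉ l})
    (τ' : Perm {y : α // y ∉ l'})
    (hv : ∀ y (hy : y ∉ l) (hy' : y ∉ l'),
      ((τ ⟨y, hy⟩ : {y : α // y ∉ l}) : α) = ((τ' ⟨y, hy'⟩ : {y : α // y ∉ l'}) : α)) :
    HEq τ τ' := by
  subst h
  exact heq_of_eq (Equiv.ext fun y => Subtype.ext (hv y.1 y.2 y.2))

lemma wsum_rec (x0 : α) : wsum c α =
    ∑ j ∈ Finset.Icc 1 (Fintype.card α),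
      ((Fintype.card α - 1).descFactorial (j - 1) : ℂ) *
        (c j * p c (Fintype.card α - j)) := by
  have main : wsum c α = ∑ b ∈ (((univ : Finset (Perm α)).image (cl x0)).sigma
      (fun l => (univ : Finset (Perm {y : α // y ∉ l})))), c b.1.length * wt c b.2 := by
    rw [wsum]
    refine Finset.sum_bij' (fun π _ => ⟨cl x0 π, σp x0 π⟩)
      (fun b _ => b.1.formPerm * Equiv.Perm.ofSubtype b.2) ?_ ?_ ?_ ?_ ?_
    · intro π _
      exact Finset.mem_sigma.mpr
        ⟨Finset.mem_image.mpr ⟨π, Finset.mem_univ _, rfl⟩, Finset.mem_univ _⟩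
    · intro b _
      exact Finset.mem_univ _
    · intro π _
      exact decomp
    · rintro ⟨l, τ⟩ hb
      obtain ⟨hn', hh'⟩ : l.Nodup ∧ l.head? = some x0 := mem_V.mp (Finset.mem_sigma.mp hb).1
      have h1 : cl x0 (l.formPerm * Equiv.Perm.ofSubtype τ) = l := cl_decomp l hn' hh' τ
      refine Sigma.ext h1 (perm_heq h1 _ _ ?_)
      intro y hy hy'
      rw [sigma_apply hy]
      exact sigma_decomp l hn' hh' τ y hy'
    · intro π _
      conv_lhs => rw [← decomp (x0 := x0) (π := π)]
      exact wt_decomp _ nodup_cl head?_cl _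
  rw [main, Finset.sum_sigma]
  have inner : ∀ l ∈ (univ : Finset (Perm α)).image (cl x0),
      (∑ τ : Perm {y : α // y ∉ l}, c l.length * wt c τ) =
      c l.length * p c (Fintype.card α - l.length) := by
    intro l hl
    obtain ⟨hn', hh'⟩ := mem_V.mp hl
    rw [← Finset.mul_sum, ← wsum, wsum_eq_p, card_compl_list l hn']
  rw [Finset.sum_congr rfl inner]
  have maps : ∀ l ∈ (univ : Finset (Perm α)).image (cl x0),
      l.length ∈ Finset.Icc 1 (Fintype.card α) := by
    intro l hl
    obtain ⟨hn', hh'⟩ := mem_V.mp hl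
    rw [Finset.mem_Icc]
    refine ⟨?_, hn'.length_le_card⟩
    cases l with
    | nil => simp at hh'
    | cons a t => simp
  rw [← Finset.sum_fiberwise_of_maps_to maps]
  refine Finset.sum_congr rfl fun j hj => ?_
  rw [Finset.mem_Icc] at hj
  have hterm : ∀ l ∈ ((univ : Finset (Perm α)).image (cl x0)).filter (fun l => l.length = j),
      c l.length * p c (Fintype.card α - l.length) = c j * p c (Fintype.card α - j) := by
    intro l hl
    rw [(Finset.mem_filter.mp hl).2]
  rw [Finset.sum_congr rfl hterm, Finset.sum_const, count_V x0 j hj.1, nsmul_eq_mul]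

lemma p_rec (k : ℕ) (hk : 1 ≤ k) :
    p c k = ∑ j ∈ Finset.Icc 1 k,
      ((k - 1).descFactorial (j - 1) : ℂ) * (c j * p c (k - j)) := by
  have h := wsum_rec (c := c) (α := Fin k) (x0 := ⟨0, by omega⟩)
  simp only [Fintype.card_fin] at h
  exact h

lemma p_eq_A : ∀ k : ℕ, p c k = (k.factorial : ℂ) * A c k := by
  intro k
  induction k using Nat.strong_induction_on with
  | _ k ih =>
    rcases Nat.eq_zero_or_pos k with hk | hk
    · subst hk
      rw [p_zero, A_zero]
      simp
    · rw [p_rec k hk]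
      have hstep : ∀ j ∈ Finset.Icc 1 k,
          ((k - 1).descFactorial (j - 1) : ℂ) * (c j * p c (k - j)) =
          ((k - 1).factorial : ℂ) * (c j * A c (k - j)) := by
        intro j hj
        rw [Finset.mem_Icc] at hj
        rw [ih (k - j) (by omega)]
        have hfac : (k - j).factorial * (k - 1).descFactorial (j - 1) = (k - 1).factorial := by
          have h := Nat.factorial_mul_descFactorial (n := k - 1) (k := j - 1) (by omega)
          rwa [show k - 1 - (j - 1) = k - j by omega] at h
        calc ((k - 1).descFactorial (j - 1) : ℂ) *
              (c j * (((k - j).factorial : ℂ) * A c (k - j)))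
            = (((k - j).factorial * (k - 1).descFactorial (j - 1) : ℕ) : ℂ) *
              (c j * A c (k - j)) := by push_cast; ring
          _ = ((k - 1).factorial : ℂ) * (c j * A c (k - j)) := by rw [hfac]
      rw [Finset.sum_congr rfl hstep, ← Finset.mul_sum, ← A_rec k hk, ← mul_assoc]
      congr 1
      rw [← Nat.cast_mul]
      congr 1
      rw [mul_comm]
      exact Nat.mul_factorial_pred (by omega)

end MCS

open Nat in
theorem mean_cycle_statistic (n m : ℕ) (hn : 1 ≤ n) (hm : 2 ≤ m) (z1 z2 : ℂ) :
    (1 / (n ! : ℂ)) *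
        ∑ π : Equiv.Perm (Fin n),
          z1 ^ Multiset.card ((Equiv.Perm.partition π).parts.filter fun j => ¬ m ∣ j) *
            z2 ^ Multiset.card ((Equiv.Perm.partition π).parts.filter fun j => m ∣ j) =
      ∑' i : ℕ,
        (PowerSeries.coeff (R := ℂ) n
            ((PowerSeries.mk fun j : ℕ =>
                if j = 0 then 0 else (if m ∣ j then z2 else z1) / (j : ℂ)) ^ i)) /
          (i ! : ℂ) := by
  classical
  set c : ℕ → ℂ := fun j => if m ∣ j then z2 else z1 with hc
  have hW : (PowerSeries.mk fun j : ℕ =>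
      if j = 0 then 0 else (if m ∣ j then z2 else z1) / (j : ℂ)) = MCS.W c := rfl
  have hL : (∑ π : Equiv.Perm (Fin n),
      z1 ^ Multiset.card ((Equiv.Perm.partition π).parts.filter fun j => ¬ m ∣ j) *
        z2 ^ Multiset.card ((Equiv.Perm.partition π).parts.filter fun j => m ∣ j)) =
      MCS.wsum c (Fin n) := by
    refine Finset.sum_congr rfl fun π _ => ?_
    rw [MCS.wt]
    set parts := (Equiv.Perm.partition π).parts with hparts
    have hsplit : parts = parts.filter (fun j => ¬ m ∣ j) + parts.filter (fun j => m ∣ j) := by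
      conv_lhs => rw [← Multiset.filter_add_not (fun j => m ∣ j) parts]
      exact add_comm _ _
    conv_rhs => rw [hsplit]
    rw [Multiset.map_add, Multiset.prod_add]
    congr 1
    · have : (parts.filter (fun j => ¬ m ∣ j)).map c =
          (parts.filter (fun j => ¬ m ∣ j)).map (fun _ => z1) := by
        refine Multiset.map_congr rfl fun x hx => ?_
        rw [hc]
        simp only [if_neg (Multiset.mem_filter.mp hx).2]
      rw [this, Multiset.map_const', Multiset.prod_replicate]
    · have : (parts.filter (fun j => m ∣ j)).map c =
          (parts.filter (fun j => m ∣ j)).map (fun _ => z2) := by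
        refine Multiset.map_congr rfl fun x hx => ?_
        rw [hc]
        simp only [if_pos (Multiset.mem_filter.mp hx).2]
      rw [this, Multiset.map_const', Multiset.prod_replicate]
  rw [hL, hW, MCS.tsum_eq_A, ← MCS.p, MCS.p_eq_A]
  rw [← mul_assoc]
  rw [one_div_mul_cancel (by exact_mod_cast Nat.factorial_ne_zero n), one_mul]
end

section
/- Let x ≥ 2 be a real number and n ≥ 1 an integer. Then Σ_{(d_1,d_2)} 2^{d_1} x^{d_2} ≤ 8 x^n, where the sum is over ordered pairs of positive integers with d_1·d_2 = n. Moreover, for any integer m ≥ 2 dividing n, Σ_{(d_1,d_2)} 2^{d_1} x^{d_2} ≤ 8 x^{n/2}, where the sum is over ordered pairs of positive integers with d_1·d_2 = n/m and x^{n/2} denotes the real power with exponent n/2. -/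
open Finset

lemma dps_pos {a b n : ℕ} (h : a * b = n) (hn : n ≠ 0) : 1 ≤ a := by
  rcases Nat.eq_zero_or_pos a with h0 | h0
  · rw [h0, zero_mul] at h; omega
  · exact h0

lemma dps_weight_sum (n : ℕ) (hn : n ≠ 0) :
    (∑ p ∈ Nat.divisorsAntidiagonal n, (1/2 : ℝ) ^ ((p.1 - 1) * (p.2 - 1))) ≤ 3 := by
  classical
  set S := Nat.divisorsAntidiagonal n with hS
  have half_nonneg : (0:ℝ) ≤ 1/2 := by norm_num
  have half_le_one : (1/2:ℝ) ≤ 1 := by norm_num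
  rw [← Finset.sum_filter_add_sum_filter_not S (fun p => p.2 = 1)]
  have hA : (∑ p ∈ S.filter (fun p => p.2 = 1), (1/2 : ℝ) ^ ((p.1 - 1) * (p.2 - 1))) ≤ 1 := by
    have hcard : (S.filter (fun p => p.2 = 1)).card ≤ 1 := by
      apply Finset.card_le_one.2
      intro a ha b hb
      simp only [Finset.mem_filter, hS, Nat.mem_divisorsAntidiagonal] at ha hb
      obtain ⟨⟨ha1, -⟩, ha2⟩ := ha
      obtain ⟨⟨hb1, -⟩, hb2⟩ := hb
      have ha1' : a.1 = n := by rw [ha2, mul_one] at ha1; exact ha1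
      have hb1' : b.1 = n := by rw [hb2, mul_one] at hb1; exact hb1
      exact Prod.ext (ha1'.trans hb1'.symm) (ha2.trans hb2.symm)
    calc (∑ p ∈ S.filter (fun p => p.2 = 1), (1/2 : ℝ) ^ ((p.1 - 1) * (p.2 - 1)))
        ≤ ∑ p ∈ S.filter (fun p => p.2 = 1), 1 := by
          apply Finset.sum_le_sum
          intro p hp
          exact pow_le_one₀ half_nonneg half_le_one
      _ = ((S.filter (fun p => p.2 = 1)).card : ℝ) := by simp
      _ ≤ 1 := by exact_mod_cast hcard
  have hB : (∑ p ∈ S.filter (fun p => ¬ p.2 = 1), (1/2 : ℝ) ^ ((p.1 - 1) * (p.2 - 1))) ≤ 2 := by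
    have step1 : (∑ p ∈ S.filter (fun p => ¬ p.2 = 1), (1/2 : ℝ) ^ ((p.1 - 1) * (p.2 - 1)))
        ≤ ∑ p ∈ S.filter (fun p => ¬ p.2 = 1), (1/2 : ℝ) ^ (p.1 - 1) := by
      apply Finset.sum_le_sum
      intro p hp
      simp only [Finset.mem_filter, hS, Nat.mem_divisorsAntidiagonal] at hp
      obtain ⟨⟨hp1, hn0⟩, hp2⟩ := hp
      have hposs : 1 ≤ p.2 := dps_pos (by rw [mul_comm]; exact hp1) hn0
      apply pow_le_pow_of_le_one half_nonneg half_le_one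
      have h21 : 1 ≤ p.2 - 1 := by omega
      calc p.1 - 1 = (p.1 - 1) * 1 := (mul_one _).symm
        _ ≤ (p.1 - 1) * (p.2 - 1) := Nat.mul_le_mul_left _ h21
    have step2 : (∑ p ∈ S.filter (fun p => ¬ p.2 = 1), (1/2 : ℝ) ^ (p.1 - 1))
        = ∑ d ∈ (S.filter (fun p => ¬ p.2 = 1)).image Prod.fst, (1/2 : ℝ) ^ (d - 1) := by
      rw [Finset.sum_image]
      intro p hp q hq hpq
      simp only [Finset.mem_coe, Finset.mem_filter, hS, Nat.mem_divisorsAntidiagonal] at hp hq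
      obtain ⟨⟨hp1, hn0⟩, -⟩ := hp
      obtain ⟨⟨hq1, -⟩, -⟩ := hq
      have hq1pos : 0 < q.1 := dps_pos hq1 hn0
      rw [hpq] at hp1
      exact Prod.ext hpq (Nat.eq_of_mul_eq_mul_left hq1pos (hp1.trans hq1.symm))
    have step3 : (∑ d ∈ (S.filter (fun p => ¬ p.2 = 1)).image Prod.fst, (1/2 : ℝ) ^ (d - 1))
        ≤ ∑ d ∈ Finset.Icc 1 n, (1/2 : ℝ) ^ (d - 1) := by
      apply Finset.sum_le_sum_of_subset_of_nonneg
      · intro d hd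
        simp only [Finset.mem_image, Finset.mem_filter, hS,
          Nat.mem_divisorsAntidiagonal] at hd
        obtain ⟨p, ⟨⟨hp1, hn0⟩, -⟩, rfl⟩ := hd
        rw [Finset.mem_Icc]
        refine ⟨dps_pos hp1 hn0, ?_⟩
        exact Nat.le_of_dvd (Nat.pos_of_ne_zero hn0) ⟨p.2, hp1.symm⟩
      · intro d _ _
        positivity
    have hIcc : Finset.Icc 1 n = (Finset.range n).image (· + 1) := by
      ext d
      simp only [Finset.mem_Icc, Finset.mem_image, Finset.mem_range]
      constructor
      · rintro ⟨h1, h2⟩; exact ⟨d - 1, by omega, by omega⟩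
      · rintro ⟨k, hk, rfl⟩; omega
    have step4 : (∑ d ∈ Finset.Icc 1 n, (1/2 : ℝ) ^ (d - 1)) ≤ 2 := by
      rw [hIcc, Finset.sum_image (by intro a _ b _ h; simp only at h; omega)]
      simp only [Nat.add_sub_cancel]
      exact sum_geometric_two_le _
    linarith
  linarith

lemma dps_main (x : ℝ) (hx : 2 ≤ x) (n : ℕ) (hn : 1 ≤ n) :
    (∑ p ∈ Nat.divisorsAntidiagonal n, (2 : ℝ) ^ p.1 * x ^ p.2) ≤ 8 * x ^ n := by
  have hx0 : (0:ℝ) ≤ x := by linarith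
  have hxn : (0:ℝ) ≤ x ^ n := pow_nonneg hx0 n
  have key : ∀ p ∈ Nat.divisorsAntidiagonal n,
      (2 : ℝ) ^ p.1 * x ^ p.2 ≤ 2 * x ^ n * (1/2 : ℝ) ^ ((p.1 - 1) * (p.2 - 1)) := by
    intro p hp
    rw [Nat.mem_divisorsAntidiagonal] at hp
    obtain ⟨hpn, hn0⟩ := hp
    have h1 : 1 ≤ p.1 := dps_pos hpn hn0
    have h2 : 1 ≤ p.2 := dps_pos (by rw [mul_comm]; exact hpn) hn0
    obtain ⟨a, ha⟩ : ∃ a, p.1 = a + 1 := ⟨p.1 - 1, by omega⟩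
    obtain ⟨b, hb⟩ : ∃ b, p.2 = b + 1 := ⟨p.2 - 1, by omega⟩
    have hnab : n = a * b + a + b + 1 := by rw [← hpn, ha, hb]; ring
    rw [ha, hb, hnab]
    have hsub : (a + 1 - 1) * (b + 1 - 1) = a * b := by simp
    rw [hsub]
    have hpow : (2:ℝ) ^ (a + a * b) ≤ x ^ (a + a * b) :=
      pow_le_pow_left₀ (by norm_num) hx _
    have hx2 : (0:ℝ) < (2:ℝ) ^ (a * b) := by positivity
    rw [div_pow, one_pow]
    have hfac : (0:ℝ) ≤ 2 * x ^ (b + 1) / 2 ^ (a * b) := by positivity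
    have expand : 2 * x ^ (a * b + a + b + 1) * (1 / 2 ^ (a * b)) - 2 ^ (a + 1) * x ^ (b + 1)
        = (2 * x ^ (b + 1) / 2 ^ (a * b)) * (x ^ (a + a * b) - 2 ^ (a + a * b)) := by
      field_simp
      ring
    nlinarith [mul_nonneg hfac (sub_nonneg.2 hpow)]
  calc (∑ p ∈ Nat.divisorsAntidiagonal n, (2 : ℝ) ^ p.1 * x ^ p.2)
      ≤ ∑ p ∈ Nat.divisorsAntidiagonal n,
          2 * x ^ n * (1/2 : ℝ) ^ ((p.1 - 1) * (p.2 - 1)) := Finset.sum_le_sum key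
    _ = 2 * x ^ n * ∑ p ∈ Nat.divisorsAntidiagonal n,
          (1/2 : ℝ) ^ ((p.1 - 1) * (p.2 - 1)) := by rw [Finset.mul_sum]
    _ ≤ 2 * x ^ n * 3 := by
        apply mul_le_mul_of_nonneg_left (dps_weight_sum n (by omega))
        positivity
    _ ≤ 8 * x ^ n := by nlinarith

theorem divisor_pair_sum_bound (x : ℝ) (hx : 2 ≤ x) (n : ℕ) (hn : 1 ≤ n) :
    (∑ p ∈ Nat.divisorsAntidiagonal n, (2 : ℝ) ^ p.1 * x ^ p.2) ≤ 8 * x ^ n ∧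
      ∀ m : ℕ, 2 ≤ m → m ∣ n →
        (∑ p ∈ Nat.divisorsAntidiagonal (n / m), (2 : ℝ) ^ p.1 * x ^ p.2) ≤
          8 * x ^ ((n : ℝ) / 2) := by
  refine ⟨dps_main x hx n hn, ?_⟩
  intro m hm hmn
  have hx1 : (1:ℝ) ≤ x := by linarith
  have hx0 : (0:ℝ) ≤ x := by linarith
  have hk : 1 ≤ n / m := Nat.one_le_div_iff (by omega) |>.2 (Nat.le_of_dvd (by omega) hmn)
  have h1 := dps_main x hx (n / m) hk
  have hle : ((n / m : ℕ) : ℝ) ≤ (n : ℝ) / 2 := by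
    obtain ⟨c, hc⟩ := hmn
    have hdc : n / m = c := by rw [hc]; exact Nat.mul_div_cancel_left c (by omega)
    rw [hdc]
    have h2c : 2 * c ≤ n := by
      have : 2 * c ≤ m * c := Nat.mul_le_mul_right c hm
      omega
    have : (2 : ℝ) * c ≤ n := by exact_mod_cast h2c
    linarith
  have hfin : (8:ℝ) * x ^ (n / m : ℕ) ≤ 8 * x ^ ((n : ℝ) / 2) := by
    rw [← Real.rpow_natCast x (n / m)]
    have := Real.rpow_le_rpow_of_exponent_le hx1 hle
    linarith
  linarith
end

section
/- Let x ∈ {√2, √3, 2, 3} and let n ≥ 1 be an integer. Then Σ_{(d_1,d_2)} 2^{d_1} x^{d_2} ≤ 7 x^n, where the sum is over ordered pairs of positive integers with d_1·d_2 = n and d_1 ≠ n. -/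
lemma aux_four_sq_le_nine_two_pow (t : ℕ) : 4 * t ^ 2 ≤ 9 * 2 ^ t := by
  induction t with
  | zero => norm_num
  | succ k ih =>
    rcases Nat.lt_or_ge k 3 with h | h
    · interval_cases k <;> norm_num
    · have h1 : 4 * (k + 1) ^ 2 ≤ 2 * (4 * k ^ 2) := by nlinarith
      have h2 : 2 * (4 * k ^ 2) ≤ 2 * (9 * 2 ^ k) := by omega
      calc 4 * (k + 1) ^ 2 ≤ 2 * (9 * 2 ^ k) := le_trans h1 h2
        _ = 9 * 2 ^ (k + 1) := by ring

theorem divisor_pair_sum_bound_variant (x : ℝ)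
    (hx : x = Real.sqrt 2 ∨ x = Real.sqrt 3 ∨ x = 2 ∨ x = 3) (n : ℕ) (hn : 1 ≤ n) :
    ∑ p ∈ (Nat.divisorsAntidiagonal n).filter (fun p => p.1 ≠ n),
        (2 : ℝ) ^ p.1 * x ^ p.2 ≤ 7 * x ^ n := by
  -- basic facts about x
  have hx0 : (0:ℝ) < x := by
    rcases hx with h|h|h|h <;> subst h <;> norm_num [Real.sqrt_pos]
  have hx2 : (2:ℝ) ≤ x ^ 2 := by
    rcases hx with h|h|h|h <;> subst h
    · rw [Real.sq_sqrt] <;> norm_num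
    · rw [Real.sq_sqrt] <;> norm_num
    · norm_num
    · norm_num
  set c := Real.sqrt 2 with hc
  have hc0 : (0:ℝ) ≤ c := Real.sqrt_nonneg 2
  have hc2 : c ^ 2 = 2 := Real.sq_sqrt (by norm_num)
  have hc1 : (1:ℝ) ≤ c := by nlinarith
  have hcx : c ≤ x := by nlinarith
  have hx1 : (1:ℝ) ≤ x := le_trans hc1 hcx
  have hxn0 : (0:ℝ) ≤ x ^ n := by positivity
  set s : Finset (ℕ × ℕ) := (Nat.divisorsAntidiagonal n).filter (fun p => p.1 ≠ n) with hs
  -- membership facts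
  have hmem : ∀ p ∈ s, p.1 * p.2 = n ∧ p.1 ≠ n ∧ 1 ≤ p.1 ∧ 2 ≤ p.2 := by
    intro p hp
    rw [hs, Finset.mem_filter, Nat.mem_divisorsAntidiagonal] at hp
    obtain ⟨⟨hmul, -⟩, hne⟩ := hp
    refine ⟨hmul, hne, ?_, ?_⟩
    · rcases Nat.eq_zero_or_pos p.1 with h | h
      · rw [h, zero_mul] at hmul; omega
      · exact h
    · rcases Nat.lt_or_ge p.2 2 with h | h
      · interval_cases h2 : p.2 <;> omega
      · exact h
  -- split the sum
  classical
  rw [← Finset.sum_filter_add_sum_filter_not s (fun p => p.1 = 1)]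
  rw [← Finset.sum_filter_add_sum_filter_not (s.filter (fun p => ¬ p.1 = 1)) (fun p => p.2 = 2)]
  set s1 := s.filter (fun p => p.1 = 1) with hs1
  set s2 := (s.filter (fun p => ¬ p.1 = 1)).filter (fun p => p.2 = 2) with hs2
  set s3 := (s.filter (fun p => ¬ p.1 = 1)).filter (fun p => ¬ p.2 = 2) with hs3
  -- bound on s1
  have hb1 : ∑ p ∈ s1, (2:ℝ) ^ p.1 * x ^ p.2 ≤ 2 * x ^ n := by
    have hle : ∀ p ∈ s1, (2:ℝ) ^ p.1 * x ^ p.2 ≤ 2 * x ^ n := by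
      intro p hp
      rw [hs1, Finset.mem_filter] at hp
      obtain ⟨hps, h1⟩ := hp
      obtain ⟨hmul, -, -, -⟩ := hmem p hps
      rw [h1, one_mul] at hmul
      rw [h1, hmul, pow_one]
    have hcard : s1.card ≤ 1 := by
      have hsub : s1 ⊆ {(1, n)} := by
        intro r hr
        rw [hs1, Finset.mem_filter] at hr
        obtain ⟨hrs, h1⟩ := hr
        obtain ⟨hmul, -, -, -⟩ := hmem r hrs
        rw [h1, one_mul] at hmul
        simp [Prod.ext_iff, h1, hmul]
      calc s1.card ≤ ({(1, n)} : Finset (ℕ × ℕ)).card := Finset.card_le_card hsub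
        _ = 1 := Finset.card_singleton _
    calc ∑ p ∈ s1, (2:ℝ) ^ p.1 * x ^ p.2 ≤ s1.card • (2 * x ^ n) :=
          Finset.sum_le_card_nsmul _ _ _ hle
      _ = (s1.card : ℝ) * (2 * x ^ n) := by rw [nsmul_eq_mul]
      _ ≤ 1 * (2 * x ^ n) := by
          apply mul_le_mul_of_nonneg_right _ (by positivity)
          exact_mod_cast hcard
      _ = 2 * x ^ n := one_mul _
  -- bound on s2
  have hb2 : ∑ p ∈ s2, (2:ℝ) ^ p.1 * x ^ p.2 ≤ 2 * x ^ n := by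
    have hle : ∀ p ∈ s2, (2:ℝ) ^ p.1 * x ^ p.2 ≤ 2 * x ^ n := by
      intro p hp
      rw [hs2, Finset.mem_filter, Finset.mem_filter] at hp
      obtain ⟨⟨hps, h1⟩, h2⟩ := hp
      obtain ⟨hmul, -, hp1, -⟩ := hmem p hps
      obtain ⟨k, hk⟩ : ∃ k, p.1 = k + 1 := ⟨p.1 - 1, by omega⟩
      rw [h2] at hmul
      have hnval : n = 2 * (k + 1) := by omega
      have hxn : x ^ n = (x ^ 2) ^ k * x ^ 2 := by rw [hnval, pow_mul, pow_succ]
      have h2k : (2:ℝ) ^ k ≤ (x ^ 2) ^ k := pow_le_pow_left₀ (by norm_num) hx2 k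
      rw [h2, hk, hxn]
      have hx2nn : (0:ℝ) ≤ x ^ 2 := by positivity
      have hmm := mul_le_mul_of_nonneg_right h2k hx2nn
      rw [pow_succ]
      nlinarith [hmm]
    have hcard : s2.card ≤ 1 := by
      have hsub : s2 ⊆ {(n / 2, 2)} := by
        intro r hr
        rw [hs2, Finset.mem_filter, Finset.mem_filter] at hr
        obtain ⟨⟨hrs, -⟩, h2⟩ := hr
        obtain ⟨hmul, -, -, -⟩ := hmem r hrs
        rw [h2] at hmul
        have : r.1 = n / 2 := by omega
        simp [Prod.ext_iff, this, h2]
      calc s2.card ≤ ({(n / 2, 2)} : Finset (ℕ × ℕ)).card := Finset.card_le_card hsub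
        _ = 1 := Finset.card_singleton _
    calc ∑ p ∈ s2, (2:ℝ) ^ p.1 * x ^ p.2 ≤ s2.card • (2 * x ^ n) :=
          Finset.sum_le_card_nsmul _ _ _ hle
      _ = (s2.card : ℝ) * (2 * x ^ n) := by rw [nsmul_eq_mul]
      _ ≤ 1 * (2 * x ^ n) := by
          apply mul_le_mul_of_nonneg_right _ (by positivity)
          exact_mod_cast hcard
      _ = 2 * x ^ n := one_mul _
  -- bound on s3
  have hb3 : ∑ p ∈ s3, (2:ℝ) ^ p.1 * x ^ p.2 ≤ 3 * x ^ n := by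
    set t := s3.card with ht
    have hct0 : (0:ℝ) < c ^ t := by positivity
    have hmem3 : ∀ p ∈ s3, p.1 * p.2 = n ∧ 2 ≤ p.1 ∧ 3 ≤ p.2 := by
      intro p hp
      rw [hs3, Finset.mem_filter, Finset.mem_filter] at hp
      obtain ⟨⟨hps, h1⟩, h2⟩ := hp
      obtain ⟨hmul, -, hp1, hp2⟩ := hmem p hps
      exact ⟨hmul, by omega, by omega⟩
    -- per-element bound
    have hle : ∀ p ∈ s3, (2:ℝ) ^ p.1 * x ^ p.2 ≤ 2 * x ^ n / c ^ t := by
      intro p hp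
      obtain ⟨hmul, hp1, hp2⟩ := hmem3 p hp
      -- counting: t ≤ (p.1 - 1) * (p.2 - 2)
      have htE : t ≤ (p.1 - 1) * (p.2 - 2) := by
        set A := s3.filter (fun r => r.1 ≤ p.1) with hA
        set B := s3.filter (fun r => p.1 ≤ r.1) with hB
        have hAcard : A.card ≤ p.1 - 1 := by
          have himg : A.image Prod.fst ⊆ Finset.Icc 2 p.1 := by
            intro d hd
            rw [Finset.mem_image] at hd
            obtain ⟨r, hr, hrd⟩ := hd
            rw [hA, Finset.mem_filter] at hr
            obtain ⟨hr3, hrle⟩ := hr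
            obtain ⟨-, hr1, -⟩ := hmem3 r hr3
            rw [Finset.mem_Icc]
            omega
          have hinj : Set.InjOn Prod.fst (A : Set (ℕ × ℕ)) := by
            intro r hr r' hr' heq
            simp only [hA, Finset.coe_filter, Set.mem_setOf_eq] at hr hr'
            obtain ⟨hrmul, hr1, -⟩ := hmem3 r hr.1
            obtain ⟨hrmul', -, -⟩ := hmem3 r' hr'.1
            have h2 : r.2 = r'.2 := by
              have heq2 : r.1 * r.2 = r.1 * r'.2 := by rw [hrmul, heq, hrmul']
              exact Nat.eq_of_mul_eq_mul_left (by omega) heq2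
            exact Prod.ext heq h2
          calc A.card = (A.image Prod.fst).card := (Finset.card_image_of_injOn hinj).symm
            _ ≤ (Finset.Icc 2 p.1).card := Finset.card_le_card himg
            _ = p.1 - 1 := by rw [Nat.card_Icc]; omega
        have hBcard : B.card ≤ p.2 - 2 := by
          have himg : B.image Prod.snd ⊆ Finset.Icc 3 p.2 := by
            intro d hd
            rw [Finset.mem_image] at hd
            obtain ⟨r, hr, hrd⟩ := hd
            rw [hB, Finset.mem_filter] at hr
            obtain ⟨hr3, hrge⟩ := hr
            obtain ⟨hrmul, hr1, hr2⟩ := hmem3 r hr3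
            have hle2 : r.2 ≤ p.2 := by
              have h1 : p.1 * r.2 ≤ r.1 * r.2 := Nat.mul_le_mul_right _ hrge
              rw [hrmul, ← hmul] at h1
              exact Nat.le_of_mul_le_mul_left h1 (by omega)
            rw [Finset.mem_Icc]
            omega
          have hinj : Set.InjOn Prod.snd (B : Set (ℕ × ℕ)) := by
            intro r hr r' hr' heq
            simp only [hB, Finset.coe_filter, Set.mem_setOf_eq] at hr hr'
            obtain ⟨hrmul, -, hr2⟩ := hmem3 r hr.1
            obtain ⟨hrmul', -, hr2'⟩ := hmem3 r' hr'.1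
            have h1 : r.1 = r'.1 := by
              have heq2 : r.1 * r.2 = r'.1 * r.2 := by rw [hrmul, heq, hrmul']
              exact Nat.eq_of_mul_eq_mul_right (by omega) heq2
            exact Prod.ext h1 heq
          calc B.card = (B.image Prod.snd).card := (Finset.card_image_of_injOn hinj).symm
            _ ≤ (Finset.Icc 3 p.2).card := Finset.card_le_card himg
            _ = p.2 - 2 := by rw [Nat.card_Icc]; omega
        have hunion : A ∪ B = s3 := by
          ext r
          simp only [hA, hB, Finset.mem_union, Finset.mem_filter]
          constructor
          · rintro (⟨h, -⟩ | ⟨h, -⟩) <;> exact h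
          · intro h
            rcases Nat.le_total r.1 p.1 with h' | h'
            · exact Or.inl ⟨h, h'⟩
            · exact Or.inr ⟨h, h'⟩
        have hinter : {p} ⊆ A ∩ B := by
          intro r hr
          rw [Finset.mem_singleton] at hr
          rw [hr]
          have hpA : p ∈ A := Finset.mem_filter.mpr ⟨hp, le_refl _⟩
          have hpB : p ∈ B := Finset.mem_filter.mpr ⟨hp, le_refl _⟩
          exact Finset.mem_inter.mpr ⟨hpA, hpB⟩
        have hcount : A.card + B.card = t + (A ∩ B).card := by
          rw [ht, ← hunion]
          exact (Finset.card_union_add_card_inter A B).symm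
        have hABone : 1 ≤ (A ∩ B).card := by
          calc 1 = ({p} : Finset (ℕ × ℕ)).card := (Finset.card_singleton _).symm
            _ ≤ (A ∩ B).card := Finset.card_le_card hinter
        -- putting it together
        obtain ⟨a, hka⟩ : ∃ a, p.1 = a + 2 := ⟨p.1 - 2, by omega⟩
        obtain ⟨b, hkb⟩ : ∃ b, p.2 = b + 3 := ⟨p.2 - 3, by omega⟩
        have hab : (a + 1) * (b + 1) = a * b + a + b + 1 := by ring
        have htot : t + 1 ≤ (p.1 - 1) + (p.2 - 2) := by omega
        have e1 : p.1 - 1 = a + 1 := by omega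
        have e2 : p.2 - 2 = b + 1 := by omega
        rw [e1, e2]
        rw [e1, e2] at htot
        omega
      -- the real inequality
      set E := (p.1 - 1) * (p.2 - 2) with hE
      have hexp : 2 * p.1 + E + p.2 = n + 2 := by
        obtain ⟨a, hka⟩ : ∃ a, p.1 = a + 2 := ⟨p.1 - 2, by omega⟩
        obtain ⟨b, hkb⟩ : ∃ b, p.2 = b + 3 := ⟨p.2 - 3, by omega⟩
        have e1 : p.1 - 1 = a + 1 := by omega
        have e2 : p.2 - 2 = b + 1 := by omega
        have hn2 : n = (a + 2) * (b + 3) := by rw [← hmul, hka, hkb]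
        rw [hE, e1, e2, hka, hkb, hn2]
        ring
      have hkey : (2:ℝ) ^ p.1 * x ^ p.2 * c ^ E ≤ 2 * x ^ n := by
        have h2p : (2:ℝ) ^ p.1 = c ^ (2 * p.1) := by rw [pow_mul, hc2]
        have hsplit : 2 * p.1 + E = (n - p.2) + 2 := by omega
        have hcc : c ^ (2 * p.1) * c ^ E = 2 * c ^ (n - p.2) := by
          rw [← pow_add, hsplit, pow_add, hc2]; ring
        have hcxp : c ^ (n - p.2) ≤ x ^ (n - p.2) := pow_le_pow_left₀ hc0 hcx _
        have hxsplit : x ^ (n - p.2) * x ^ p.2 = x ^ n := by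
          rw [← pow_add]
          congr 1
          omega
        have hxp2 : (0:ℝ) ≤ x ^ p.2 := by positivity
        calc (2:ℝ) ^ p.1 * x ^ p.2 * c ^ E = (c ^ (2 * p.1) * c ^ E) * x ^ p.2 := by
              rw [h2p]; ring
          _ = 2 * (c ^ (n - p.2) * x ^ p.2) := by rw [hcc]; ring
          _ ≤ 2 * (x ^ (n - p.2) * x ^ p.2) := by
              have := mul_le_mul_of_nonneg_right hcxp hxp2
              linarith
          _ = 2 * x ^ n := by rw [hxsplit]
      have hcE : c ^ t ≤ c ^ E := pow_le_pow_right₀ hc1 htE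
      have hcE0 : (0:ℝ) < c ^ E := by positivity
      rw [le_div_iff₀ hct0]
      calc (2:ℝ) ^ p.1 * x ^ p.2 * c ^ t ≤ (2:ℝ) ^ p.1 * x ^ p.2 * c ^ E := by
            apply mul_le_mul_of_nonneg_left hcE
            positivity
        _ ≤ 2 * x ^ n := hkey
    -- sum it up
    have hsum : ∑ p ∈ s3, (2:ℝ) ^ p.1 * x ^ p.2 ≤ t • (2 * x ^ n / c ^ t) :=
      Finset.sum_le_card_nsmul _ _ _ hle
    have h23 : 2 * (t:ℝ) ≤ 3 * c ^ t := by
      have hnat := aux_four_sq_le_nine_two_pow t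
      have hcast : 4 * (t:ℝ) ^ 2 ≤ 9 * 2 ^ t := by exact_mod_cast hnat
      have hctsq : (c ^ t) ^ 2 = 2 ^ t := by rw [← pow_mul, mul_comm, pow_mul, hc2]
      have hct1 : (1:ℝ) ≤ c ^ t := by
        calc (1:ℝ) = 1 ^ t := (one_pow t).symm
          _ ≤ c ^ t := pow_le_pow_left₀ (by norm_num) hc1 t
      nlinarith [Nat.cast_nonneg (α := ℝ) t]
    calc ∑ p ∈ s3, (2:ℝ) ^ p.1 * x ^ p.2 ≤ t • (2 * x ^ n / c ^ t) := hsum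
      _ = (2 * (t:ℝ) / c ^ t) * x ^ n := by rw [nsmul_eq_mul]; ring
      _ ≤ 3 * x ^ n := by
          apply mul_le_mul_of_nonneg_right _ hxn0
          rw [div_le_iff₀ hct0]
          linarith
  linarith
end

section
/- Let t ≥ 2 be a real number and r ≥ 2 an integer. Set L := ⌊2·log r/log t⌋ and let Z(u) := exp( Σ_{1 ≤ k ≤ L} (10·t^k/k)·u^k + Σ_{k > L} (10(r+1)·t^{k/2}/k)·u^k ) ∈ ℝ[[u]]. Then for every integer n ≥ 1, the coefficient of u^n in Z(u) satisfies |[u^n] Z(u)| ≤ t^{n/2} · C(10(r+1) + n − 1, n), where C(a,b) denotes the binomial coefficient and log denotes the natural logarithm. -/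
open PowerSeries Finset Nat

noncomputable def myV (a : ℕ) : PowerSeries ℝ :=
  PowerSeries.mk fun k => if k = 0 then 0 else (a : ℝ) / k

lemma coeff_pow_eq_zero_of_lt {f : PowerSeries ℝ} (hf : constantCoeff f = 0)
    {i n : ℕ} (h : n < i) : coeff n (f ^ i) = 0 := by
  have hx : (X : ℝ⟦X⟧) ^ i ∣ f ^ i := pow_dvd_pow_of_dvd (X_dvd_iff.mpr hf) i
  exact (X_pow_dvd_iff.mp hx) n h

lemma coeff_pow_nonneg {f : PowerSeries ℝ} (hf : ∀ k, 0 ≤ coeff k f) (i n : ℕ) :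
    0 ≤ coeff n (f ^ i) := by
  induction i generalizing n with
  | zero => rw [pow_zero, coeff_one]; split <;> norm_num
  | succ i ih =>
    rw [pow_succ, coeff_mul]
    exact Finset.sum_nonneg fun p _ => mul_nonneg (ih p.1) (hf p.2)

lemma abs_coeff_pow_le {f g : PowerSeries ℝ} (h : ∀ k, |coeff k g| ≤ coeff k f)
    (i n : ℕ) : |coeff n (g ^ i)| ≤ coeff n (f ^ i) := by
  induction i generalizing n with
  | zero => rw [pow_zero, pow_zero, coeff_one]; split <;> simp
  | succ i ih =>
    rw [pow_succ, coeff_mul, pow_succ, coeff_mul]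
    refine (Finset.abs_sum_le_sum_abs _ _).trans (Finset.sum_le_sum fun p _ => ?_)
    rw [abs_mul]
    exact mul_le_mul (ih p.1) (h p.2) (abs_nonneg _) ((abs_nonneg _).trans (ih p.1))

lemma derivative_myV (a : ℕ) : d⁄dX ℝ (myV a) = PowerSeries.mk fun _ => (a : ℝ) := by
  ext n
  rw [coeff_derivative, coeff_mk]
  simp only [myV, coeff_mk, Nat.succ_ne_zero, if_false]
  push_cast
  rw [div_mul_cancel₀]
  positivity

lemma myV_rec (a : ℕ) (i n : ℕ) :
    ((n:ℝ)+1) * coeff (n+1) (myV a ^ (i+1)) =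
      ((i:ℝ)+1) * a * ∑ j ∈ Finset.range (n+1), coeff j (myV a ^ i) := by
  have h1 : coeff (n+1) (myV a ^ (i+1)) * ((n:ℝ)+1)
      = coeff n (d⁄dX ℝ (myV a ^ (i+1))) := by
    rw [coeff_derivative]
  rw [mul_comm, h1, Derivation.leibniz_pow, Nat.add_sub_cancel]
  rw [smul_eq_mul, derivative_myV, map_nsmul, coeff_mul]
  rw [Finset.Nat.sum_antidiagonal_eq_sum_range_succ_mk]
  simp only [coeff_mk, nsmul_eq_mul]
  rw [Finset.mul_sum, Finset.mul_sum]
  push_cast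
  exact Finset.sum_congr rfl fun j _ => by ring

lemma constantCoeff_myV (a : ℕ) : constantCoeff (myV a) = 0 := by
  rw [← coeff_zero_eq_constantCoeff_apply, myV, coeff_mk, if_pos rfl]

noncomputable def myc (a n : ℕ) : ℝ :=
  ∑ i ∈ Finset.range (n+1), coeff n (myV a ^ i) / (i ! : ℝ)

lemma myc_rec (a n : ℕ) :
    ((n:ℝ)+1) * myc a (n+1) = a * ∑ j ∈ Finset.range (n+1), myc a j := by
  have key : ((n:ℝ)+1) * myc a (n+1)
      = ∑ i ∈ Finset.range (n+2), ((n:ℝ)+1) * coeff (n+1) (myV a ^ i) / (i ! : ℝ) := by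
    rw [myc, Finset.mul_sum]
    exact Finset.sum_congr rfl fun i _ => by ring
  rw [key, Finset.sum_range_succ']
  have h0 : ((n:ℝ)+1) * coeff (n+1) (myV a ^ 0) / (0! : ℝ) = 0 := by
    rw [pow_zero, coeff_one, if_neg (Nat.succ_ne_zero n)]; simp
  rw [h0, add_zero]
  have step : ∀ i ∈ Finset.range (n+1),
      ((n:ℝ)+1) * coeff (n+1) (myV a ^ (i+1)) / ((i+1)! : ℝ)
        = a * ∑ j ∈ Finset.range (n+1), coeff j (myV a ^ i) / (i ! : ℝ) := by
    intro i _
    rw [myV_rec, Nat.factorial_succ, Finset.mul_sum, Finset.mul_sum]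
    push_cast
    rw [Finset.sum_div]
    refine Finset.sum_congr rfl fun j _ => ?_
    have hi : (i ! : ℝ) ≠ 0 := by positivity
    field_simp
  rw [Finset.sum_congr rfl step]
  simp only [Finset.mul_sum]
  rw [Finset.sum_comm]
  refine Finset.sum_congr rfl fun j hj => ?_
  rw [← Finset.mul_sum, myc]
  congr 1
  refine (Finset.sum_subset (Finset.range_subset_range.2 ?_) fun i _ hi => ?_).symm
  · exact Nat.succ_le_succ (Nat.lt_succ_iff.mp (Finset.mem_range.mp hj))
  · rw [coeff_pow_eq_zero_of_lt (constantCoeff_myV a)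
      (Nat.lt_of_succ_le (Nat.le_of_not_lt (fun h => hi (Finset.mem_range.mpr h)))), zero_div]

lemma hockey (b n : ℕ) :
    ∑ j ∈ Finset.range (n+1), ((b+j).choose j) = (b+1+n).choose n := by
  induction n with
  | zero => simp
  | succ n ih =>
    rw [Finset.sum_range_succ, ih]
    have h1 : b+1+(n+1) = (b+1+n)+1 := by ring
    have h2 : b+(n+1) = b+1+n := by ring
    rw [h1, h2, Nat.choose_succ_succ]

lemma myc_eq (b : ℕ) : ∀ n, myc (b+1) n = ((b+n).choose n : ℝ) := by
  intro n
  induction n using Nat.strong_induction_on with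
  | _ n ih =>
    match n with
    | 0 =>
      rw [myc]
      simp [coeff_zero_eq_constantCoeff_apply]
    | Nat.succ m =>
      have hrec := myc_rec (b+1) m
      have hsum : ∑ j ∈ Finset.range (m+1), myc (b+1) j
          = ((b+1+m).choose m : ℝ) := by
        rw [Finset.sum_congr rfl fun j hj => ih j (Finset.mem_range.mp hj)]
        rw [← hockey b m]
        push_cast
        rfl
      rw [hsum] at hrec
      have hnat : (b+1) * (b+1+m).choose m = (m+1) * (b+1+m).choose (m+1) := by
        have h := Nat.choose_succ_right_eq (b+1+m) m
        rw [Nat.add_sub_cancel] at h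
        rw [mul_comm (b+1) _, mul_comm (m+1) _]
        exact h.symm
      have hm1 : ((m:ℝ)+1) ≠ 0 := by positivity
      have harg : b + (m+1) = b+1+m := by ring
      rw [harg]
      apply mul_left_cancel₀ hm1
      rw [hrec]
      have := congrArg (fun x : ℕ => (x : ℝ)) hnat
      push_cast at this ⊢
      linarith

open Nat in
theorem generating_function_coeff_binomial_bound (t : ℝ) (ht : 2 ≤ t) (r : ℕ) (hr : 2 ≤ r)
    (n : ℕ) (hn : 1 ≤ n) :
    |∑' i : ℕ,
        (PowerSeries.coeff n
            ((PowerSeries.mk fun k : ℕ =>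
                if k = 0 then 0
                else if k ≤ Nat.floor (2 * Real.log r / Real.log t) then
                  10 * t ^ k / (k : ℝ)
                else 10 * ((r : ℝ) + 1) * t ^ ((k : ℝ) / 2) / (k : ℝ)) ^ i)) /
          (i ! : ℝ)| ≤
      t ^ ((n : ℝ) / 2) * (Nat.choose (10 * (r + 1) + n - 1) n : ℝ) := by
  have ht0 : (0:ℝ) < t := by linarith
  have ht1 : (1:ℝ) < t := by linarith
  set L : ℕ := Nat.floor (2 * Real.log r / Real.log t) with hLdef
  set W : PowerSeries ℝ := PowerSeries.mk fun k : ℕ =>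
      if k = 0 then 0
      else if k ≤ L then 10 * t ^ k / (k : ℝ)
      else 10 * ((r : ℝ) + 1) * t ^ ((k : ℝ) / 2) / (k : ℝ) with hWdef
  set s : ℝ := t ^ ((2:ℝ)⁻¹) with hsdef
  have hs0 : 0 ≤ s := Real.rpow_nonneg ht0.le _
  set a : ℕ := 10 * (r + 1) with hadef
  have hsk : ∀ k : ℕ, s ^ k = t ^ ((k:ℝ)/2) := by
    intro k
    rw [hsdef, ← Real.rpow_natCast (t ^ ((2:ℝ)⁻¹)) k, ← Real.rpow_mul ht0.le]
    congr 1; ring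
  have hlogt : 0 < Real.log t := Real.log_pos ht1
  have hr1 : (1:ℝ) ≤ (r:ℝ) := by exact_mod_cast hr.trans' (by norm_num)
  have hrpos : (0:ℝ) < (r:ℝ) := by linarith
  have hbound : ∀ k : ℕ, k ≤ L → t ^ ((k:ℝ)/2) ≤ (r:ℝ) := by
    intro k hk
    have hx : (k:ℝ) ≤ 2 * Real.log r / Real.log t := by
      have h0 : 0 ≤ 2 * Real.log r / Real.log t := by
        have := Real.log_nonneg hr1
        positivity
      exact (Nat.le_floor_iff h0).mp hk
    have hx2 : (k:ℝ) * Real.log t ≤ 2 * Real.log r := (le_div_iff₀ hlogt).mp hx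
    rw [Real.rpow_def_of_pos ht0, ← Real.exp_log hrpos]
    apply Real.exp_le_exp.mpr
    nlinarith
  have hcoeff : ∀ k, |coeff k W| ≤ coeff k (rescale s (myV a)) := by
    intro k
    rw [coeff_rescale, hWdef, myV, coeff_mk, coeff_mk]
    match k with
    | 0 => simp
    | Nat.succ m =>
      have hk0 : (0:ℝ) < ((m:ℝ)+1) := by positivity
      have hkc : ((m+1 : ℕ) : ℝ) = (m:ℝ)+1 := by push_cast; ring
      have hamc : ((a:ℕ) : ℝ) = 10*((r:ℝ)+1) := by rw [hadef]; push_cast; ring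
      rw [if_neg (Nat.succ_ne_zero m), if_neg (Nat.succ_ne_zero m)]
      by_cases hkL : m + 1 ≤ L
      · rw [if_pos hkL]
        have hX : (0:ℝ) < t ^ ((((m+1:ℕ)):ℝ)/2) := Real.rpow_pos_of_pos ht0 _
        have hb := hbound (m+1) hkL
        have habs : |10 * t ^ (m+1) / ((m+1:ℕ) : ℝ)| = 10 * t ^ (m+1) / ((m+1:ℕ) : ℝ) :=
          abs_of_nonneg (by positivity)
        have ht2 : t ^ (m+1) = t ^ ((((m+1:ℕ)):ℝ)/2) * t ^ ((((m+1:ℕ)):ℝ)/2) := by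
          rw [← Real.rpow_natCast t (m+1), ← Real.rpow_add ht0]
          congr 1; ring
        have hrhs : s ^ (m+1) * (((a:ℕ):ℝ) / ((m+1:ℕ) : ℝ))
            = t ^ ((((m+1:ℕ)):ℝ)/2) * (10*((r:ℝ)+1)) / ((m+1:ℕ) : ℝ) := by
          rw [hsk, hamc]; ring
        rw [habs, hrhs, ht2]
        gcongr ?_ / _
        nlinarith
      · rw [if_neg hkL]
        have hx : (0:ℝ) < t ^ (((m+1:ℕ)):ℝ) := by positivity
        have habs : |10 * ((r:ℝ)+1) * t ^ ((((m+1:ℕ)):ℝ)/2) / ((m+1:ℕ) : ℝ)|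
            = 10 * ((r:ℝ)+1) * t ^ ((((m+1:ℕ)):ℝ)/2) / ((m+1:ℕ) : ℝ) := by
          apply abs_of_nonneg
          have : (0:ℝ) ≤ t ^ ((((m+1:ℕ)):ℝ)/2) := (Real.rpow_pos_of_pos ht0 _).le
          positivity
        rw [habs, hsk, hamc]
        apply le_of_eq
        ring
  have hVs0 : ∀ k, 0 ≤ coeff k (rescale s (myV a)) := fun k =>
    (abs_nonneg _).trans (hcoeff k)
  have hW0 : constantCoeff W = 0 := by
    rw [← coeff_zero_eq_constantCoeff_apply, hWdef, coeff_mk, if_pos rfl]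
  have hsupp : ∀ i ∉ Finset.range (n+1), coeff n (W ^ i) / (i ! : ℝ) = 0 := by
    intro i hi
    rw [coeff_pow_eq_zero_of_lt hW0 (by simpa using Finset.mem_range.not.mp hi), zero_div]
  rw [tsum_eq_sum hsupp]
  have step1 : |∑ i ∈ Finset.range (n+1), coeff n (W ^ i) / (i ! : ℝ)|
      ≤ ∑ i ∈ Finset.range (n+1), coeff n ((rescale s (myV a)) ^ i) / (i ! : ℝ) := by
    refine (Finset.abs_sum_le_sum_abs _ _).trans (Finset.sum_le_sum fun i _ => ?_)
    rw [abs_div, Nat.abs_cast]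
    gcongr
    exact abs_coeff_pow_le hcoeff i n
  refine step1.trans ?_
  have step2 : ∀ i : ℕ, coeff n ((rescale s (myV a)) ^ i) = s ^ n * coeff n (myV a ^ i) := by
    intro i
    rw [← map_pow, coeff_rescale]
  have step3 : ∑ i ∈ Finset.range (n+1), coeff n ((rescale s (myV a)) ^ i) / (i ! : ℝ)
      = s ^ n * myc a n := by
    rw [myc, Finset.mul_sum]
    exact Finset.sum_congr rfl fun i _ => by rw [step2 i]; ring
  rw [step3, hsk]
  have ha1 : a = (10*r+9)+1 := by omega
  have hch : 10*r+9+1 + n - 1 = 10*r+9+n := by omega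
  rw [ha1, myc_eq (10*r+9) n, hch]
end

section
/- Let t ≥ 2 be a real number and r ≥ 2 an integer with r ≥ 20000 and r ≥ t^{(log t)^2}. Set L := ⌊2·log r/log t⌋ and let Z(u) := exp( Σ_{1 ≤ k ≤ L} (10·t^k/k)·u^k + Σ_{k > L} (10(r+1)·t^{k/2}/k)·u^k ) ∈ ℝ[[u]]. Then for every integer n ≥ 1, the coefficient of u^n in Z(u) satisfies |[u^n] Z(u)| ≤ t^{n/2} · t^{n·log log r/log r} · exp( 70·(r+1)·t/(log r)^2 ), where log denotes the natural logarithm. -/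
open Finset in
lemma real_cauchy (f g : ℕ → ℝ) (hf0 : ∀ n, 0 ≤ f n) (hg0 : ∀ n, 0 ≤ g n)
    (hf : Summable f) (hg : Summable g) :
    Summable (fun n => ∑ kl ∈ Finset.HasAntidiagonal.antidiagonal n, f kl.1 * g kl.2) ∧
      ∑' n, ∑ kl ∈ Finset.HasAntidiagonal.antidiagonal n, f kl.1 * g kl.2 = (∑' n, f n) * (∑' n, g n) := by
  have hf' : (fun x => ‖f x‖) = f := funext fun x => Real.norm_of_nonneg (hf0 x)
  have hg' : (fun x => ‖g x‖) = g := funext fun x => Real.norm_of_nonneg (hg0 x)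
  have h1 : Summable fun x => ‖f x‖ := hf'.symm ▸ hf
  have h2 : Summable fun x => ‖g x‖ := hg'.symm ▸ hg
  exact ⟨(summable_norm_sum_mul_antidiagonal_of_summable_norm h1 h2).of_norm,
    (tsum_mul_tsum_eq_tsum_sum_antidiagonal_of_summable_norm h1 h2).symm⟩

lemma coeff_pow_nonneg_s18 (w : ℕ → ℝ) (hw : ∀ k, 0 ≤ w k) (i : ℕ) (m : ℕ) :
    0 ≤ PowerSeries.coeff (R := ℝ) m ((PowerSeries.mk w) ^ i) := by
  induction i generalizing m with
  | zero =>
    rw [pow_zero, PowerSeries.coeff_one]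
    split <;> norm_num
  | succ i ih =>
    rw [pow_succ, PowerSeries.coeff_mul]
    refine Finset.sum_nonneg fun kl _ => mul_nonneg (ih _) ?_
    simpa using hw kl.2

lemma pow_coeff_tsum (w : ℕ → ℝ) (hw : ∀ k, 0 ≤ w k) (x : ℝ) (hx : 0 ≤ x)
    (hs : Summable fun k => w k * x ^ k) (i : ℕ) :
    Summable (fun m => PowerSeries.coeff (R := ℝ) m ((PowerSeries.mk w) ^ i) * x ^ m) ∧
      ∑' m, PowerSeries.coeff (R := ℝ) m ((PowerSeries.mk w) ^ i) * x ^ m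
        = (∑' k, w k * x ^ k) ^ i := by
  induction i with
  | zero =>
    have h1 : ∀ m : ℕ, PowerSeries.coeff (R := ℝ) m ((PowerSeries.mk w) ^ 0) * x ^ m
        = if m = 0 then 1 else 0 := by
      intro m
      rw [pow_zero, PowerSeries.coeff_one]
      split <;> simp_all
    constructor
    · apply summable_of_ne_finset_zero (s := {0})
      intro m hm
      rw [h1]
      simp_all
    · rw [tsum_congr h1, tsum_eq_single 0, pow_zero] <;> simp_all
  | succ i ih =>
    obtain ⟨ihs, iht⟩ := ih
    have key : ∀ m : ℕ, PowerSeries.coeff (R := ℝ) m ((PowerSeries.mk w) ^ (i + 1)) * x ^ m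
        = ∑ kl ∈ Finset.HasAntidiagonal.antidiagonal m,
            (PowerSeries.coeff (R := ℝ) kl.1 ((PowerSeries.mk w) ^ i) * x ^ kl.1)
              * (w kl.2 * x ^ kl.2) := by
      intro m
      rw [pow_succ, PowerSeries.coeff_mul, Finset.sum_mul]
      refine Finset.sum_congr rfl fun kl hkl => ?_
      have h : kl.1 + kl.2 = m := Finset.HasAntidiagonal.mem_antidiagonal.mp hkl
      rw [← h, pow_add, PowerSeries.coeff_mk]
      ring
    have hnn : ∀ m : ℕ, 0 ≤ PowerSeries.coeff (R := ℝ) m ((PowerSeries.mk w) ^ i) * x ^ m :=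
      fun m => mul_nonneg (coeff_pow_nonneg_s18 w hw i m) (pow_nonneg hx m)
    have hnn2 : ∀ m : ℕ, 0 ≤ w m * x ^ m := fun m => mul_nonneg (hw m) (pow_nonneg hx m)
    obtain ⟨hS, hT⟩ := real_cauchy _ _ hnn hnn2 ihs hs
    constructor
    · exact (summable_congr key).mpr hS
    · rw [tsum_congr key, hT, iht, pow_succ]

lemma key_bound (w : ℕ → ℝ) (hw : ∀ k, 0 ≤ w k) (x : ℝ) (hx : 0 < x)
    (hs : Summable fun k => w k * x ^ k) (n : ℕ) (C : ℝ) (hC : ∑' k, w k * x ^ k ≤ C) :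
    |∑' i : ℕ, PowerSeries.coeff (R := ℝ) n ((PowerSeries.mk w) ^ i) / (Nat.factorial i : ℝ)|
      ≤ (x ^ n)⁻¹ * Real.exp C := by
  set S := ∑' k, w k * x ^ k with hS_def
  have hS0 : 0 ≤ S := tsum_nonneg fun k => mul_nonneg (hw k) (pow_nonneg hx.le k)
  have hxn : (0:ℝ) < x ^ n := pow_pos hx n
  have hA_le : ∀ i : ℕ, PowerSeries.coeff (R := ℝ) n ((PowerSeries.mk w) ^ i) ≤ S ^ i * (x ^ n)⁻¹ := by
    intro i
    obtain ⟨hsum, htsum⟩ := pow_coeff_tsum w hw x hx.le hs i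
    have h1 : PowerSeries.coeff (R := ℝ) n ((PowerSeries.mk w) ^ i) * x ^ n ≤ S ^ i := by
      rw [← htsum]
      exact Summable.le_tsum hsum n fun m _ =>
        mul_nonneg (coeff_pow_nonneg_s18 w hw i m) (pow_nonneg hx.le m)
    rw [← le_div_iff₀ hxn] at h1
    rwa [div_eq_mul_inv] at h1
  have hterm : ∀ i : ℕ, PowerSeries.coeff (R := ℝ) n ((PowerSeries.mk w) ^ i) / (Nat.factorial i : ℝ)
      ≤ (x ^ n)⁻¹ * (S ^ i / (Nat.factorial i : ℝ)) := by
    intro i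
    have hfac : (0:ℝ) < (Nat.factorial i : ℝ) := by positivity
    rw [mul_div_assoc']
    gcongr
    linarith [hA_le i, mul_comm (S ^ i) (x ^ n)⁻¹]
  have hnn : ∀ i : ℕ, 0 ≤ PowerSeries.coeff (R := ℝ) n ((PowerSeries.mk w) ^ i) / (Nat.factorial i : ℝ) :=
    fun i => div_nonneg (coeff_pow_nonneg_s18 w hw i n) (by positivity)
  have hbig : Summable (fun i : ℕ => (x ^ n)⁻¹ * (S ^ i / (Nat.factorial i : ℝ))) :=
    (Real.summable_pow_div_factorial S).mul_left _
  have hsummable : Summable (fun i : ℕ =>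
      PowerSeries.coeff (R := ℝ) n ((PowerSeries.mk w) ^ i) / (Nat.factorial i : ℝ)) :=
    hbig.of_nonneg_of_le hnn hterm
  rw [abs_of_nonneg (tsum_nonneg hnn)]
  calc ∑' i : ℕ, PowerSeries.coeff (R := ℝ) n ((PowerSeries.mk w) ^ i) / (Nat.factorial i : ℝ)
      ≤ ∑' i : ℕ, (x ^ n)⁻¹ * (S ^ i / (Nat.factorial i : ℝ)) :=
        Summable.tsum_le_tsum hterm hsummable hbig
    _ = (x ^ n)⁻¹ * ∑' i : ℕ, S ^ i / (Nat.factorial i : ℝ) := tsum_mul_left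
    _ = (x ^ n)⁻¹ * Real.exp S := by
        rw [Real.exp_eq_exp_ℝ, NormedSpace.exp_eq_tsum_div]
    _ ≤ (x ^ n)⁻¹ * Real.exp C :=
        mul_le_mul_of_nonneg_left (Real.exp_le_exp.2 hC) (by positivity)

set_option maxHeartbeats 2000000 in
open Nat in
theorem generating_function_coeff_refined_bound (t : ℝ) (ht : 2 ≤ t) (r : ℕ) (hr : 2 ≤ r)
    (hr' : 20000 ≤ r) (hrt : t ^ (Real.log t ^ 2) ≤ (r : ℝ)) (n : ℕ) (hn : 1 ≤ n) :
    |∑' i : ℕ,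
        (PowerSeries.coeff (R := ℝ) n
            ((PowerSeries.mk fun k : ℕ =>
                if k = 0 then 0
                else if k ≤ Nat.floor (2 * Real.log r / Real.log t) then
                  10 * t ^ k / (k : ℝ)
                else 10 * ((r : ℝ) + 1) * t ^ ((k : ℝ) / 2) / (k : ℝ)) ^ i)) /
          (i ! : ℝ)| ≤
      t ^ ((n : ℝ) / 2) * t ^ ((n : ℝ) * Real.log (Real.log r) / Real.log r) *
        Real.exp (70 * ((r : ℝ) + 1) * t / Real.log r ^ 2) := by
  have ht0 : (0:ℝ) < t := by linarith
  set c := Real.log t with hc_def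
  set R := Real.log (r:ℝ) with hR_def
  have hc0 : 0 < c := Real.log_pos (by linarith)
  have hclb : (0.6931471803:ℝ) ≤ c :=
    le_trans Real.log_two_gt_d9.le (Real.log_le_log (by norm_num) ht)
  have hrR : (20000:ℝ) ≤ (r:ℝ) := by exact_mod_cast hr'
  have hr0 : (0:ℝ) < (r:ℝ) := by linarith
  -- exp numerics
  have hexp1 : Real.exp 1 < 2.7182818286 := Real.exp_one_lt_d9
  have hexp19 : Real.exp 19 < 4e8 := by
    calc Real.exp 19 = Real.exp 1 ^ (19:ℕ) := by
          rw [← Real.exp_nat_mul]; norm_num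
      _ < 2.7182818286 ^ (19:ℕ) :=
          pow_lt_pow_left₀ hexp1 (Real.exp_pos 1).le (by norm_num)
      _ < 4e8 := by norm_num
  have hR95 : (9.5:ℝ) ≤ R := by
    rw [hR_def, Real.le_log_iff_exp_le hr0]
    have hsq : Real.exp 9.5 ^ 2 = Real.exp 19 := by
      rw [sq, ← Real.exp_add]; norm_num
    nlinarith [Real.exp_pos (9.5:ℝ), hsq, hexp19]
  have hRpos : (0:ℝ) < R := by linarith
  have hexp22 : Real.exp 2.2 ≤ 9.5 := by
    have h5 : Real.exp 2.2 ^ (5:ℕ) = Real.exp 11 := by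
      rw [← Real.exp_nat_mul]; norm_num
    have h11 : Real.exp 11 = Real.exp 1 ^ (11:ℕ) := by
      rw [← Real.exp_nat_mul]; norm_num
    refine le_of_pow_le_pow_left₀ (n := 5) (by norm_num) (by norm_num) ?_
    rw [h5, h11]
    calc Real.exp 1 ^ (11:ℕ) ≤ 2.7182818286 ^ (11:ℕ) :=
          pow_le_pow_left₀ (Real.exp_pos 1).le hexp1.le _
      _ ≤ 9.5 ^ (5:ℕ) := by norm_num
  have hlogR22 : (2.2:ℝ) ≤ Real.log R := by
    rw [Real.le_log_iff_exp_le hRpos]; linarith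
  have hlogRpos : (0:ℝ) < Real.log R := by linarith
  have hc3 : c ^ 3 ≤ R := by
    have h := Real.log_le_log (Real.rpow_pos_of_pos ht0 _) hrt
    rw [Real.log_rpow ht0] at h
    nlinarith [h]
  have hcR : c ≤ R := by
    rcases le_or_gt c 1 with h | h
    · linarith
    · nlinarith [hc3]
  have hexp055 : Real.exp 0.55 ≤ 1.81 := by
    have h4 : Real.exp 0.55 = Real.exp 0.1375 ^ (4:ℕ) := by
      rw [← Real.exp_nat_mul]; norm_num
    have h1 : Real.exp 0.1375 ≤ 1 / 0.8625 := by
      have h := Real.add_one_le_exp (-0.1375 : ℝ)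
      have h2 := Real.exp_pos (0.1375:ℝ)
      rw [Real.exp_neg] at h
      rw [le_div_iff₀ (by norm_num)]
      nlinarith [mul_le_mul_of_nonneg_left h h2.le, mul_inv_cancel₀ h2.ne']
    calc Real.exp 0.55 = Real.exp 0.1375 ^ (4:ℕ) := h4
      _ ≤ (1/0.8625) ^ (4:ℕ) := pow_le_pow_left₀ (Real.exp_pos _).le h1 _
      _ ≤ 1.81 := by norm_num
  -- sqrt facts and delta bound
  have he1 : (2.7182818283:ℝ) < Real.exp 1 := Real.exp_one_gt_d9
  have hepos : (0:ℝ) < Real.exp 1 := Real.exp_pos 1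
  set s := Real.sqrt R with hs_def
  have hs0 : 0 ≤ s := Real.sqrt_nonneg R
  have hs2 : s ^ 2 = R := Real.sq_sqrt hRpos.le
  have hs3 : (3:ℝ) ≤ s := by nlinarith
  have hlogs : Real.log R = 2 * Real.log s := by
    have h := Real.log_sqrt hRpos.le
    rw [← hs_def] at h
    linarith
  have hloglin : Real.log s * Real.exp 1 ≤ s := by
    have h := Real.add_one_le_exp (Real.log s - 1)
    rw [Real.exp_sub, Real.exp_log (by linarith : (0:ℝ) < s)] at h
    have h2 : Real.log s ≤ s / Real.exp 1 := by linarith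
    calc Real.log s * Real.exp 1 ≤ (s / Real.exp 1) * Real.exp 1 :=
          mul_le_mul_of_nonneg_right h2 hepos.le
      _ = s := by field_simp
  have hlogR_le' : Real.log R * Real.exp 1 ≤ 2 * s := by
    have h : Real.log R * Real.exp 1 = 2 * (Real.log s * Real.exp 1) := by
      rw [hlogs]; ring
    linarith
  have hdelta4 : 4 * Real.log R ≤ R := by
    have hes : (8.1:ℝ) ≤ Real.exp 1 * s := by
      have := mul_le_mul he1.le hs3 (by norm_num) hepos.le
      linarith
    have h1 : 8 * s ≤ Real.exp 1 * R := by
      have h := mul_le_mul_of_nonneg_left hes hs0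
      have h2 : s * (Real.exp 1 * s) = Real.exp 1 * R := by rw [← hs2]; ring
      linarith [h, h2, hs0]
    have h2 : 4 * Real.log R * Real.exp 1 ≤ 8 * s := by linarith
    have h3 : Real.exp 1 * (4 * Real.log R) ≤ Real.exp 1 * R := by linarith
    exact le_of_mul_le_mul_left h3 hepos
  have hdeltaq : Real.log R / R ≤ 1/4 := by
    rw [div_le_iff₀ hRpos]; linarith
  have hd0 : (0:ℝ) < Real.log R / R := div_pos hlogRpos hRpos
  -- a := c * (log R / R) and its bound
  set a := c * (Real.log R / R) with ha_def
  have ha0 : (0:ℝ) < a := mul_pos hc0 hd0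
  have he3 : (20:ℝ) ≤ Real.exp 1 ^ 3 := by
    have h := pow_le_pow_left₀ (by norm_num : (0:ℝ) ≤ 2.7182818283) he1.le 3
    nlinarith [h]
  have hl3 : Real.log R ^ 3 * Real.exp 1 ^ 3 ≤ 8 * s ^ 3 := by
    have h := pow_le_pow_left₀ (mul_nonneg hlogRpos.le hepos.le) hlogR_le' 3
    calc Real.log R ^ 3 * Real.exp 1 ^ 3 = (Real.log R * Real.exp 1) ^ 3 := by ring
      _ ≤ (2 * s) ^ 3 := h
      _ = 8 * s ^ 3 := by ring
  have ha55 : a ≤ 0.55 := by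
    have haR : a * R = c * Real.log R := by
      rw [ha_def]; field_simp
    have hcube : (c * Real.log R) ^ 3 ≤ R * Real.log R ^ 3 := by
      have h := mul_le_mul_of_nonneg_right hc3 (pow_nonneg hlogRpos.le 3)
      nlinarith [h]
    have hlr3 : Real.log R ^ 3 ≤ 0.4 * s ^ 3 := by
      nlinarith [mul_le_mul_of_nonneg_left he3 (pow_nonneg hlogRpos.le 3)]
    have h2 : a ^ 3 * R ^ 3 ≤ R * (0.4 * s ^ 3) := by
      calc a ^ 3 * R ^ 3 = (a * R) ^ 3 := by ring
        _ = (c * Real.log R) ^ 3 := by rw [haR]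
        _ ≤ R * Real.log R ^ 3 := hcube
        _ ≤ R * (0.4 * s ^ 3) := by nlinarith [hlr3]
    have hs5 : (0:ℝ) < s ^ 5 := pow_pos (by linarith) 5
    have hR3 : R ^ 3 = s * s ^ 5 := by rw [← hs2]; ring
    have hR1 : R * (0.4 * s ^ 3) = 0.4 * s ^ 5 := by rw [← hs2]; ring
    have key : (a ^ 3 * s) * s ^ 5 ≤ 0.4 * s ^ 5 := by
      rw [hR3, hR1] at h2; nlinarith [h2]
    have key2 : a ^ 3 * s ≤ 0.4 := le_of_mul_le_mul_right key hs5
    have key3 : a ^ 3 ≤ 0.14 := by nlinarith [ha0.le, hs3]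
    refine le_of_pow_le_pow_left₀ (n := 3) (by norm_num) (by norm_num) ?_
    nlinarith [key3]
  have hexpa : Real.exp a ≤ 1.81 := le_trans (Real.exp_le_exp.2 ha55) hexp055
  -- L and floor facts
  set L := Nat.floor (2 * R / c) with hL_def
  have h2Rc0 : (0:ℝ) ≤ 2 * R / c := by positivity
  have hLfloor : (L:ℝ) ≤ 2 * R / c := Nat.floor_le h2Rc0
  have hLfloor2 : 2 * R / c < (L:ℝ) + 1 := Nat.lt_floor_add_one _
  have hLc' : (L:ℝ) * c ≤ 2 * R := by
    calc (L:ℝ) * c ≤ (2*R/c) * c := mul_le_mul_of_nonneg_right hLfloor hc0.le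
      _ = 2*R := by field_simp
  have hLc2' : 2 * R < ((L:ℝ) + 1) * c := by
    calc 2*R = (2*R/c)*c := by field_simp
      _ < ((L:ℝ)+1)*c := mul_lt_mul_of_pos_right hLfloor2 hc0
  -- x, q1, q2
  set x := Real.exp (-(c * (1/2 + Real.log R / R))) with hx_def
  have hx0 : (0:ℝ) < x := Real.exp_pos _
  set q1 := Real.exp (c * (1/2 - Real.log R / R)) with hq1_def
  set q2 := Real.exp (-a) with hq2_def
  have hq1pos : (0:ℝ) < q1 := Real.exp_pos _
  have hq2pos : (0:ℝ) < q2 := Real.exp_pos _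
  have hq2lt : q2 < 1 := by rw [hq2_def]; exact Real.exp_lt_one_iff.mpr (by linarith only [ha0])
  have htx : t * x = q1 := by
    rw [hx_def, hq1_def]
    nth_rewrite 1 [← Real.exp_log ht0]
    rw [← Real.exp_add]
    congr 1
    ring
  have hy1 : (0.17:ℝ) ≤ c * (1/2 - Real.log R / R) := by
    have h1 : (1/4:ℝ) ≤ 1/2 - Real.log R / R := by linarith only [hdeltaq]
    have h2 := mul_le_mul_of_nonneg_left h1 hc0.le
    nlinarith only [hclb, h2]
  have hq1ge : (1.17:ℝ) ≤ q1 := by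
    rw [hq1_def]
    have h := Real.add_one_le_exp (c * (1/2 - Real.log R / R))
    linarith only [h, hy1]
  have hq1gt1 : (1:ℝ) < q1 := by linarith only [hq1ge]
  have hq1inv1 : q1⁻¹ ≤ 0.855 := by
    have h := inv_anti₀ (by norm_num : (0:ℝ) < 1.17) hq1ge
    calc q1⁻¹ ≤ (1.17:ℝ)⁻¹ := h
      _ ≤ 0.855 := by norm_num
  have hq1invlt : q1⁻¹ < 1 := inv_lt_one_of_one_lt₀ hq1gt1
  have hq1inv0 : (0:ℝ) ≤ q1⁻¹ := by positivity
  -- the coefficient function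
  set w : ℕ → ℝ := (fun k : ℕ =>
    if k = 0 then 0
    else if k ≤ L then 10 * t ^ k / (k : ℝ)
    else 10 * ((r : ℝ) + 1) * t ^ ((k : ℝ) / 2) / (k : ℝ)) with hw_def
  have hw : ∀ k, 0 ≤ w k := by
    intro k
    rw [hw_def]
    dsimp only
    split_ifs with h1 h2
    · exact le_rfl
    · positivity
    · positivity
  have hfk1 : ∀ k : ℕ, k ≤ L → w k * x ^ k ≤ 10 * q1 ^ k := by
    intro k hk
    rcases Nat.eq_zero_or_pos k with h0 | h0
    · subst h0
      have : w 0 = 0 := by simp [hw_def]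
      rw [this]
      have := pow_nonneg hq1pos.le 0
      nlinarith only [this]
    · have hk0 : k ≠ 0 := h0.ne'
      have hk1 : (1:ℝ) ≤ (k:ℝ) := by exact_mod_cast h0
      have hwk : w k = 10 * t ^ k / (k:ℝ) := by
        rw [hw_def]; dsimp only; rw [if_neg hk0, if_pos hk]
      rw [hwk]
      have heq : 10 * t ^ k / (k:ℝ) * x ^ k = 10 * (t*x) ^ k / (k:ℝ) := by
        rw [mul_pow]; ring
      rw [heq, htx]
      have hq1k := pow_nonneg hq1pos.le k
      rw [div_le_iff₀ (by linarith only [hk1] : (0:ℝ) < (k:ℝ))]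
      nlinarith only [hq1k, hk1]
  have hfk2 : ∀ k : ℕ, L < k → w k * x ^ k = 10 * ((r:ℝ)+1) * q2 ^ k / (k:ℝ) := by
    intro k hk
    have hk0 : k ≠ 0 := by omega
    have hwk : w k = 10 * ((r:ℝ)+1) * t ^ ((k:ℝ)/2) / (k:ℝ) := by
      rw [hw_def]; dsimp only; rw [if_neg hk0, if_neg (by omega : ¬ k ≤ L)]
    rw [hwk]
    have hTx : t ^ ((k:ℝ)/2) * x ^ k = q2 ^ k := by
      rw [Real.rpow_def_of_pos ht0, hx_def, ← Real.exp_nat_mul, ← Real.exp_add,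
        hq2_def, ← Real.exp_nat_mul]
      congr 1
      rw [ha_def]
      field_simp
      ring
    calc 10*((r:ℝ)+1)*t^((k:ℝ)/2)/(k:ℝ) * x^k
        = 10*((r:ℝ)+1)*(t^((k:ℝ)/2) * x^k)/(k:ℝ) := by ring
      _ = 10*((r:ℝ)+1)*q2^k/(k:ℝ) := by rw [hTx]
  -- tail estimates and summability
  have htail_eq : ∀ k : ℕ, w (k + (L+1)) * x ^ (k + (L+1))
      = 10*((r:ℝ)+1)*q2^(k+(L+1))/(((k + (L+1)) : ℕ):ℝ) := fun k => hfk2 _ (by omega)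
  have htail_le : ∀ k : ℕ, w (k + (L+1)) * x ^ (k + (L+1))
      ≤ (10*((r:ℝ)+1)*q2^(L+1)/((L:ℝ)+1)) * q2 ^ k := by
    intro k
    rw [htail_eq k]
    have hcast : ((L:ℝ)+1) ≤ (((k + (L+1)) : ℕ):ℝ) := by
      push_cast
      linarith only [Nat.cast_nonneg (α := ℝ) k]
    calc 10*((r:ℝ)+1)*q2^(k+(L+1))/(((k + (L+1)) : ℕ):ℝ)
        ≤ 10*((r:ℝ)+1)*q2^(k+(L+1))/((L:ℝ)+1) := by gcongr <;> positivity
      _ = (10*((r:ℝ)+1)*q2^(L+1)/((L:ℝ)+1)) * q2 ^ k := by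
          rw [pow_add]; ring
  have hgeo2 : Summable (fun k : ℕ => q2 ^ k) := summable_geometric_of_lt_one hq2pos.le hq2lt
  have htail_nonneg : ∀ k : ℕ, 0 ≤ w (k + (L+1)) * x ^ (k + (L+1)) :=
    fun k => mul_nonneg (hw _) (pow_nonneg hx0.le _)
  have hsum_tail : Summable (fun k : ℕ => w (k + (L+1)) * x ^ (k + (L+1))) :=
    Summable.of_nonneg_of_le htail_nonneg htail_le (hgeo2.mul_left _)
  have hs : Summable (fun k : ℕ => w k * x ^ k) := (summable_nat_add_iff (L+1)).mp hsum_tail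
  -- geometric sum bound for the head
  have hq1invsum : ∑ j ∈ Finset.range (L+1), (q1⁻¹) ^ j ≤ (1 - q1⁻¹)⁻¹ := by
    have hsg : Summable (fun j : ℕ => (q1⁻¹) ^ j) := summable_geometric_of_lt_one hq1inv0 hq1invlt
    calc ∑ j ∈ Finset.range (L+1), (q1⁻¹) ^ j ≤ ∑' j : ℕ, (q1⁻¹) ^ j :=
          Summable.sum_le_tsum _ (fun j _ => pow_nonneg hq1inv0 j) hsg
      _ = (1 - q1⁻¹)⁻¹ := tsum_geometric_of_lt_one hq1inv0 hq1invlt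
  have hrefl : ∑ k ∈ Finset.range (L+1), q1 ^ k ≤ q1 ^ L * (1 - q1⁻¹)⁻¹ := by
    have h1 : ∑ k ∈ Finset.range (L+1), q1 ^ k
        = ∑ j ∈ Finset.range (L+1), q1 ^ L * (q1⁻¹) ^ j := by
      rw [← Finset.sum_range_reflect]
      refine Finset.sum_congr rfl fun j hj => ?_
      have hjL : j ≤ L := by
        simp only [Finset.mem_range] at hj; omega
      have hidx : L + 1 - 1 - j = L - j := by omega
      rw [hidx, inv_pow, eq_comm, mul_inv_eq_iff_eq_mul₀ (pow_ne_zero j hq1pos.ne'),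
        ← pow_add]
      congr 1
      omega
    rw [h1, ← Finset.mul_sum]
    exact mul_le_mul_of_nonneg_left hq1invsum (pow_nonneg hq1pos.le L)
  have hexpR : Real.exp R = (r:ℝ) := by rw [hR_def]; exact Real.exp_log hr0
  have hexplogR : Real.exp (Real.log R) = R := Real.exp_log hRpos
  have hq1L : q1 ^ L ≤ 1.81 * (r:ℝ) / R^2 := by
    have hE : (L:ℝ) * (c * (1/2 - Real.log R / R)) ≤ R - 2*Real.log R + a := by
      have h1 : (L:ℝ)*c*(1/2) ≤ R := by linarith only [hLc']
      have h3 : 2*R - c ≤ (L:ℝ)*c := by linarith only [hLc2']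
      have h4 : (2*R - c)*(Real.log R/R) ≤ (L:ℝ)*c*(Real.log R/R) :=
        mul_le_mul_of_nonneg_right h3 hd0.le
      have h5 : (2*R - c)*(Real.log R/R) = 2*Real.log R - a := by
        rw [ha_def]; field_simp
      nlinarith only [h1, h4, h5]
    calc q1 ^ L = Real.exp ((L:ℝ) * (c * (1/2 - Real.log R/R))) := by
          rw [hq1_def, ← Real.exp_nat_mul]
      _ ≤ Real.exp (R - 2*Real.log R + a) := Real.exp_le_exp.2 hE
      _ = (r:ℝ) * Real.exp a / R^2 := by
          rw [show R - 2*Real.log R + a = R + a - (Real.log R + Real.log R) from by ring,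
            Real.exp_sub, Real.exp_add, Real.exp_add, hexpR, hexplogR]
          ring
      _ ≤ 1.81 * (r:ℝ) / R^2 := by
          have hR2 : (0:ℝ) < R^2 := pow_pos hRpos 2
          have hnum : (r:ℝ) * Real.exp a ≤ 1.81 * (r:ℝ) := by nlinarith only [hexpa, hr0.le]
          exact (div_le_div_iff_of_pos_right hR2).mpr hnum
  have h1mq1 : (0.145:ℝ) ≤ 1 - q1⁻¹ := by linarith only [hq1inv1]
  have hS1 : ∑ k ∈ Finset.range (L+1), w k * x ^ k ≤ 125 * (r:ℝ) / R^2 := by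
    have h1 : ∑ k ∈ Finset.range (L+1), w k * x^k ≤ ∑ k ∈ Finset.range (L+1), 10 * q1 ^ k :=
      Finset.sum_le_sum fun k hk =>
        hfk1 k (by simpa [Finset.mem_range, Nat.lt_succ_iff] using hk)
    have h2 : ∑ k ∈ Finset.range (L+1), 10 * q1^k = 10 * ∑ k ∈ Finset.range (L+1), q1^k :=
      (Finset.mul_sum _ _ _).symm
    have h3 : (1 - q1⁻¹)⁻¹ ≤ 6.9 := by
      have h := inv_anti₀ (by norm_num : (0:ℝ) < 0.145) h1mq1
      calc (1 - q1⁻¹)⁻¹ ≤ (0.145:ℝ)⁻¹ := h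
        _ ≤ 6.9 := by norm_num
    have h4 : q1 ^ L * (1 - q1⁻¹)⁻¹ ≤ (1.81 * (r:ℝ)/R^2) * 6.9 :=
      mul_le_mul hq1L h3 (by positivity) (by positivity)
    have h5 : (0:ℝ) < R^2 := by positivity
    calc ∑ k ∈ Finset.range (L+1), w k * x^k ≤ 10 * ∑ k ∈ Finset.range (L+1), q1^k :=
          h1.trans_eq h2
      _ ≤ 10 * (q1^L * (1-q1⁻¹)⁻¹) := by nlinarith only [hrefl]
      _ ≤ 10 * ((1.81*(r:ℝ)/R^2) * 6.9) := by nlinarith only [h4]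
      _ = 124.89 * ((r:ℝ)/R^2) := by ring
      _ ≤ 125 * (r:ℝ)/R^2 := by
          rw [show (125:ℝ) * (r:ℝ)/R^2 = 125 * ((r:ℝ)/R^2) from by ring]
          gcongr
          norm_num
  -- tail sum bound
  have hS2a : ∑' k : ℕ, w (k+(L+1)) * x^(k+(L+1))
      ≤ (10*((r:ℝ)+1)*q2^(L+1)/((L:ℝ)+1)) * (1-q2)⁻¹ := by
    calc ∑' k : ℕ, w (k+(L+1)) * x^(k+(L+1))
        ≤ ∑' k : ℕ, (10*((r:ℝ)+1)*q2^(L+1)/((L:ℝ)+1)) * q2^k :=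
          Summable.tsum_le_tsum htail_le hsum_tail (hgeo2.mul_left _)
      _ = (10*((r:ℝ)+1)*q2^(L+1)/((L:ℝ)+1)) * ∑' k : ℕ, q2^k := tsum_mul_left
      _ = (10*((r:ℝ)+1)*q2^(L+1)/((L:ℝ)+1)) * (1-q2)⁻¹ := by
          rw [tsum_geometric_of_lt_one hq2pos.le hq2lt]
  have hq2L1 : q2^(L+1) ≤ (R^2)⁻¹ := by
    have h1 : 2*Real.log R ≤ ((L:ℝ)+1)*a := by
      have h2 := mul_le_mul_of_nonneg_right hLc2'.le hd0.le
      have h3 : (2*R)*(Real.log R/R) = 2*Real.log R := by field_simp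
      have h4 : ((L:ℝ)+1)*c*(Real.log R/R) = ((L:ℝ)+1)*a := by rw [ha_def]; ring
      nlinarith only [h2, h3, h4]
    calc q2^(L+1) = Real.exp ((((L+1):ℕ):ℝ) * (-a)) := by
          rw [hq2_def, ← Real.exp_nat_mul]
      _ ≤ Real.exp (-(2*Real.log R)) := Real.exp_le_exp.2 (by push_cast; linarith only [h1])
      _ = (R^2)⁻¹ := by
          rw [Real.exp_neg, show (2:ℝ)*Real.log R = Real.log R + Real.log R from by ring,
            Real.exp_add, hexplogR, sq]
  have h1mq2 : a * q2 ≤ 1 - q2 := by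
    have h := Real.add_one_le_exp a
    have h2 : q2 * (a+1) ≤ q2 * Real.exp a := mul_le_mul_of_nonneg_left (by linarith) hq2pos.le
    have h3 : q2 * Real.exp a = 1 := by rw [hq2_def, ← Real.exp_add]; simp
    nlinarith only [h2, h3]
  have hq2invb : (1 - q2)⁻¹ ≤ 1.81 / a := by
    have haq2 : (0:ℝ) < a * q2 := mul_pos ha0 hq2pos
    have h1 : (1-q2)⁻¹ ≤ (a*q2)⁻¹ := inv_anti₀ haq2 h1mq2
    have h2 : (a*q2)⁻¹ = Real.exp a / a := by
      rw [hq2_def, Real.exp_neg]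
      field_simp
    rw [h2] at h1
    refine h1.trans ?_
    gcongr
  have hL1inv : ((L:ℝ)+1)⁻¹ ≤ c / (2*R) := by
    have h1 : (0:ℝ) < 2*R/c := by positivity
    have h2 := inv_anti₀ h1 hLfloor2.le
    calc ((L:ℝ)+1)⁻¹ ≤ (2*R/c)⁻¹ := h2
      _ = c/(2*R) := by rw [inv_div]
  have hS2 : ∑' k : ℕ, w (k+(L+1)) * x^(k+(L+1)) ≤ 4.2 * ((r:ℝ)+1) / R^2 := by
    have hb : (10*((r:ℝ)+1)*q2^(L+1)/((L:ℝ)+1)) * (1-q2)⁻¹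
        ≤ 10*((r:ℝ)+1) * ((R^2)⁻¹ * ((c/(2*R)) * (1.81/a))) := by
      have e1 : (10*((r:ℝ)+1)*q2^(L+1)/((L:ℝ)+1)) * (1-q2)⁻¹
          = 10*((r:ℝ)+1) * (q2^(L+1) * (((L:ℝ)+1)⁻¹ * (1-q2)⁻¹)) := by ring
      rw [e1]
      have hq2nn : (0:ℝ) ≤ q2^(L+1) := by positivity
      have hinv1 : (0:ℝ) ≤ ((L:ℝ)+1)⁻¹ := by positivity
      have hinv2 : (0:ℝ) ≤ (1-q2)⁻¹ := by
        have : (0:ℝ) < 1 - q2 := by linarith only [hq2lt]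
        positivity
      gcongr
    have heq : (c/(2*R)) * (1.81/a) = 1.81/(2*Real.log R) := by
      rw [ha_def]
      field_simp
    have h181 : 1.81/(2*Real.log R) ≤ 0.42 := by
      rw [div_le_iff₀ (by linarith only [hlogR22] : (0:ℝ) < 2*Real.log R)]
      linarith only [hlogR22]
    calc ∑' k : ℕ, w (k+(L+1)) * x^(k+(L+1))
        ≤ 10*((r:ℝ)+1) * ((R^2)⁻¹ * ((c/(2*R)) * (1.81/a))) := hS2a.trans hb
      _ = 10*((r:ℝ)+1) * ((R^2)⁻¹ * (1.81/(2*Real.log R))) := by rw [heq]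
      _ ≤ 10*((r:ℝ)+1) * ((R^2)⁻¹ * 0.42) := by
          gcongr
      _ = 4.2*((r:ℝ)+1)/R^2 := by ring
  -- total bound
  have hC : ∑' k : ℕ, w k * x^k ≤ 70*((r:ℝ)+1)*t/R^2 := by
    have hsplit := Summable.sum_add_tsum_nat_add (f := fun k : ℕ => w k * x^k) (L+1) hs
    have hR2 : (0:ℝ) < R^2 := by positivity
    have hfin : 125*(r:ℝ)/R^2 + 4.2*((r:ℝ)+1)/R^2 ≤ 70*((r:ℝ)+1)*t/R^2 := by
      rw [← add_div, div_le_div_iff₀ hR2 hR2]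
      have h2 := mul_le_mul_of_nonneg_left ht (by positivity : (0:ℝ) ≤ (r:ℝ)+1)
      have h3 : 125*(r:ℝ) + 4.2*((r:ℝ)+1) ≤ 70*((r:ℝ)+1)*t := by nlinarith only [h2, hr0.le]
      nlinarith only [mul_le_mul_of_nonneg_right h3 hR2.le]
    have := hS1
    have := hS2
    linarith only [hsplit, hS1, hS2, hfin]
  have hkey := key_bound w hw x hx0 hs n (70*((r:ℝ)+1)*t/R^2) hC
  refine hkey.trans (le_of_eq ?_)
  have h1 : (x^n)⁻¹ = t ^ ((n:ℝ)/2) * t ^ ((n:ℝ) * Real.log R / R) := by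
    rw [hx_def, ← Real.exp_nat_mul, ← Real.exp_neg,
      Real.rpow_def_of_pos ht0, Real.rpow_def_of_pos ht0, ← Real.exp_add]
    congr 1
    field_simp
    ring
  rw [h1]
end
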